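/- arXiv:2306.07574 — 7 statements merged into one kernel-verified Lean document; each statement's English description precedes it below -/
import Mathlib

section
/- Let n ≥ 1 and let c ∈ ℝ^n, and let h = {x ∈ ℝ^n : ∑_{i=1}^n c_i x_i = 1} be the corresponding affine hyperplane avoiding the origin. Then the weight of h satisfies w(h) ≤ 1. -/
/-!
Write `k = |S|`, so that `1 / (k * binom(n, k)) = (k - 1)! (n - k)! / n!`. Call an ordering of `S`
a first-passage ordering if its partial sums of `c` stay below `1` and end at `1`. By the cycle
lemma every ordering of a set `S` with `∑_{i ∈ S} c i = 1` has a first-passage rotation, so there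
are at least `(k - 1)!` first-passage orderings of `S`. Following one by any ordering of the
complement gives a permutation of `[n]` whose partial sums first reach `1` after exactly the
elements of `S`; hence distinct `S` yield distinct permutations and
`∑_S (k - 1)! (n - k)! ≤ n!`.
-/

open scoped Classical in
/-- The Clifton–Huang weight of the hyperplane `{x : ∑ i, c i * x i = 1}`:
the sum over nonempty subsets `S ⊆ [n]` with `∑_{i ∈ S} c i = 1` of
`1 / (|S| * binom(n, |S|))`. -/
noncomputable def hyperplaneWeight {n : ℕ} (c : Fin n → ℝ) : ℝ :=
  ∑ S : Finset (Fin n),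
    if S.Nonempty ∧ ∑ i ∈ S, c i = 1 then
      1 / (S.card * (n.choose S.card)) else 0

open Finset Nat

namespace List

section
variable {M : Type*} [AddCommMonoid M]

theorem sum_take_rotate_add_of_add_le {l : List M} {j m : ℕ} (h : j + m ≤ l.length) :
    ((l.rotate j).take m).sum + (l.take j).sum = (l.take (j + m)).sum := by
  rw [rotate_eq_drop_append_take (by omega), take_append_of_le_length (by simp; omega),
    take_add, sum_append, add_comm]

theorem sum_take_rotate_add_of_le_add {l : List M} {j m : ℕ} (hj : j ≤ l.length)
    (hm : m ≤ l.length) (h : l.length ≤ j + m) :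
    ((l.rotate j).take m).sum + (l.take j).sum = l.sum + (l.take (j + m - l.length)).sum := by
  obtain ⟨u, rfl⟩ : ∃ u, m = (l.drop j).length + u := ⟨j + m - l.length, by simp; omega⟩
  rw [rotate_eq_drop_append_take hj, take_length_add_append, take_take,
    min_eq_left (by simp at *; omega), sum_append, length_drop,
    show j + (l.length - j + u) - l.length = u by omega,
    ← sum_take_add_sum_drop l j]
  abel
end

theorem exists_rotate_sum_take_lt {G : Type*} [AddCommMonoid G] [LinearOrder G]
    [IsOrderedCancelAddMonoid G] (l : List G) (h : 0 < l.sum) :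
    ∃ j < l.length, ∀ m < l.length, ((l.rotate j).take m).sum < l.sum := by
  have hmax : ∃ j < l.length, ∀ i < l.length, (l.take i).sum ≤ (l.take j).sum := by
    obtain ⟨j, hj, hmax⟩ := exists_max_image (Finset.range l.length) (fun i => (l.take i).sum)
      ⟨0, mem_range.2 (length_pos_of_sum_pos l h)⟩
    exact ⟨j, mem_range.1 hj, fun i hi => hmax i (mem_range.2 hi)⟩
  classical
  -- rotate to the first position where the prefix sums attain their maximum
  set j := Nat.find hmax
  obtain ⟨hjk, hle⟩ : j < l.length ∧ _ := Nat.find_spec hmax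
  have hlt : ∀ i < j, (l.take i).sum < (l.take j).sum := by
    intro i hi
    have hnot_max := Nat.find_min hmax hi
    push Not at hnot_max
    obtain ⟨i', hi', hgt⟩ := hnot_max (hi.trans hjk)
    exact hgt.trans_le (hle i' hi')
  refine ⟨j, hjk, fun m hm => ?_⟩
  rcases lt_or_ge (j + m) l.length with hwrap | hwrap
  · have hnonpos : ((l.rotate j).take m).sum ≤ 0 := by
      rw [← add_le_iff_nonpos_left, sum_take_rotate_add_of_add_le hwrap.le]
      exact hle _ hwrap
    exact hnonpos.trans_lt h
  · refine lt_of_add_lt_add_right (a := (l.take j).sum) ?_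
    rw [sum_take_rotate_add_of_le_add hjk.le hm.le hwrap]
    exact add_lt_add_right (hlt (j + m - l.length) (by omega)) _

end List

namespace Finset

variable {α : Type*} [DecidableEq α]

noncomputable def orderings (S : Finset α) : Finset (List α) :=
  S.toList.permutations.toFinset

variable {S T : Finset α} {l l₁ l₂ : List α}

theorem mem_orderings : l ∈ S.orderings ↔ (l : Multiset α) = S.val := by
  rw [orderings, List.mem_toFinset, List.mem_permutations, ← Multiset.coe_eq_coe, coe_toList]

theorem card_orderings (S : Finset α) : #S.orderings = (#S)! := by
  rw [orderings, List.toFinset_card_of_nodup (List.nodup_permutations _ S.nodup_toList),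
    List.length_permutations, length_toList]

theorem length_of_mem_orderings (h : l ∈ S.orderings) : l.length = #S := by
  simpa using congrArg Multiset.card (mem_orderings.1 h)

theorem sum_map_of_mem_orderings {M : Type*} [AddCommMonoid M] (f : α → M)
    (h : l ∈ S.orderings) : (l.map f).sum = ∑ i ∈ S, f i := by
  rw [sum_eq_multiset_sum, ← mem_orderings.1 h, Multiset.map_coe, Multiset.sum_coe]

theorem eq_of_mem_orderings (hS : l ∈ S.orderings) (hT : l ∈ T.orderings) : S = T :=
  val_inj.1 ((mem_orderings.1 hS).symm.trans (mem_orderings.1 hT))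

theorem rotate_mem_orderings (h : l ∈ S.orderings) (j : ℕ) : l.rotate j ∈ S.orderings :=
  mem_orderings.2 ((Multiset.coe_eq_coe.2 (l.rotate_perm j)).trans (mem_orderings.1 h))

theorem append_mem_orderings_union (h : Disjoint S T) (h₁ : l₁ ∈ S.orderings)
    (h₂ : l₂ ∈ T.orderings) : l₁ ++ l₂ ∈ (S ∪ T).orderings := by
  rw [mem_orderings, ← Multiset.coe_add, mem_orderings.1 h₁, mem_orderings.1 h₂,
    ← disjUnion_eq_union S T h]
  rfl

end Finset

theorem Nat.one_div_mul_choose_eq {n k : ℕ} (hk : k ≠ 0) (hkn : k ≤ n) :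
    (1 : ℝ) / (k * n.choose k) = (k - 1)! * (n - k)! / n ! := by
  have hchoose : 0 < n.choose k := Nat.choose_pos hkn
  have h := Nat.choose_mul_factorial_mul_factorial hkn
  rw [← mul_factorial_pred hk] at h
  rw [div_eq_div_iff (by positivity) (by positivity), one_mul, ← h]
  push_cast
  ring

section FirstPassage

variable {α : Type*} [DecidableEq α] (c : α → ℝ)

noncomputable def firstPassageOrderings (S : Finset α) : Finset (List α) :=
  S.orderings.filter fun l => (l.map c).sum = 1 ∧ ∀ m < l.length, ((l.take m).map c).sum < 1

variable {c}

theorem factorial_pred_le_card_firstPassageOrderings {S : Finset α} (hS : ∑ i ∈ S, c i = 1) :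
    (#S - 1)! ≤ #(firstPassageOrderings c S) := by
  set pairs := (S.orderings ×ˢ range #S).filter fun p =>
    p.1.rotate p.2 ∈ firstPassageOrderings c S
  have hsurj : #S.orderings ≤ #pairs := by
    refine card_le_card_of_surjOn Prod.fst fun l hl => ?_
    have hsum : (l.map c).sum = 1 := by rw [sum_map_of_mem_orderings c hl, hS]
    obtain ⟨j, hj, hlt⟩ := List.exists_rotate_sum_take_lt (l.map c) (hsum ▸ one_pos)
    simp only [List.length_map, hsum, ← List.map_rotate, ← List.map_take] at hj hlt
    refine ⟨(l, j), mem_filter.2 ⟨mem_product.2 ⟨hl, mem_range.2 ?_⟩, ?_⟩, rfl⟩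
    · rwa [← length_of_mem_orderings hl]
    · refine mem_filter.2 ⟨rotate_mem_orderings hl j, ?_, ?_⟩
      · rw [List.map_rotate, ((l.map c).rotate_perm j).sum_eq, hsum]
      · simpa using hlt
  have hinj : #pairs ≤ #(firstPassageOrderings c S ×ˢ range #S) := by
    refine card_le_card_of_injOn (fun p => (p.1.rotate p.2, p.2)) (fun p hp => ?_) ?_
    · obtain ⟨hp, hrot⟩ := mem_filter.1 hp
      exact mem_product.2 ⟨hrot, (mem_product.1 hp).2⟩
    · rintro ⟨l, j⟩ - ⟨l', j'⟩ - h
      simp only [Prod.mk.injEq] at h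
      obtain ⟨hl, rfl⟩ := h
      rw [List.rotate_eq_rotate.1 hl]
  have hpos : #S ≠ 0 := (nonempty_of_sum_ne_zero (hS ▸ one_ne_zero)).card_pos.ne'
  refine Nat.le_of_mul_le_mul_left ?_ (Nat.pos_of_ne_zero hpos)
  calc #S * (#S - 1)! = #S.orderings := by rw [card_orderings, mul_factorial_pred hpos]
    _ ≤ #pairs := hsurj
    _ ≤ #(firstPassageOrderings c S ×ˢ range #S) := hinj
    _ = #S * #(firstPassageOrderings c S) := by rw [card_product, card_range, mul_comm]

theorem length_le_of_append_eq_append {S T : Finset α} {l₁ l₂ l₁' l₂' : List α}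
    (h : l₁ ∈ firstPassageOrderings c S) (h' : l₁' ∈ firstPassageOrderings c T)
    (heq : l₁ ++ l₂ = l₁' ++ l₂') : l₁.length ≤ l₁'.length := by
  by_contra! hlt
  have hprefix : l₁.take l₁'.length = l₁' := by
    simpa [List.take_append_of_le_length hlt.le] using congrArg (List.take l₁'.length) heq
  have hprefix_lt := (mem_filter.1 h).2.2 _ hlt
  rw [hprefix, (mem_filter.1 h').2.1] at hprefix_lt
  exact hprefix_lt.false

theorem sum_card_firstPassageOrderings_mul_le [Fintype α] :
    ∑ S : Finset α, #(firstPassageOrderings c S) * (#Sᶜ)! ≤ (Fintype.card α)! := by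
  calc ∑ S : Finset α, #(firstPassageOrderings c S) * (#Sᶜ)!
      = #(univ.sigma fun S => firstPassageOrderings c S ×ˢ Sᶜ.orderings) := by
        simp only [card_sigma, card_product, card_orderings]
    _ ≤ #(univ : Finset α).orderings := by
        refine card_le_card_of_injOn (fun p => p.2.1 ++ p.2.2) (fun p hp => ?_) ?_
        · obtain ⟨h₁, h₂⟩ := mem_product.1 (mem_sigma.1 hp).2
          simpa using append_mem_orderings_union disjoint_compl_right (mem_filter.1 h₁).1 h₂
        · rintro ⟨S, l₁, l₂⟩ hp ⟨T, l₁', l₂'⟩ hp' heq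
          obtain ⟨h₁, -⟩ := mem_product.1 (mem_sigma.1 hp).2
          obtain ⟨h₁', -⟩ := mem_product.1 (mem_sigma.1 hp').2
          obtain ⟨rfl, rfl⟩ := List.append_inj heq <| le_antisymm
            (length_le_of_append_eq_append h₁ h₁' heq)
            (length_le_of_append_eq_append h₁' h₁ heq.symm)
          obtain rfl := eq_of_mem_orderings (mem_filter.1 h₁).1 (mem_filter.1 h₁').1
          rfl
    _ = (Fintype.card α)! := by rw [card_orderings, Finset.card_univ]

theorem one_div_card_mul_choose_le [Fintype α] {S : Finset α} (hS : ∑ i ∈ S, c i = 1) :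
    (1 : ℝ) / (#S * (Fintype.card α).choose #S)
      ≤ (#(firstPassageOrderings c S) * (#Sᶜ)! : ℕ) / (Fintype.card α)! := by
  have hpos : #S ≠ 0 := (nonempty_of_sum_ne_zero (hS ▸ one_ne_zero)).card_pos.ne'
  rw [one_div_mul_choose_eq hpos (card_le_univ S), ← card_compl]
  gcongr
  exact_mod_cast Nat.mul_le_mul_right _ (factorial_pred_le_card_firstPassageOrderings hS)

end FirstPassage

theorem weight_le_one_general (n : ℕ) (c : Fin n → ℝ) :
    hyperplaneWeight c ≤ 1 := by
  calc hyperplaneWeight c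
      ≤ ∑ S : Finset (Fin n), (#(firstPassageOrderings c S) * (#Sᶜ)! : ℕ) / (n ! : ℝ) := by
        unfold hyperplaneWeight
        refine sum_le_sum fun S _ => ?_
        split_ifs with hS
        · simpa using one_div_card_mul_choose_le hS.2
        · positivity
    _ = (∑ S : Finset (Fin n), #(firstPassageOrderings c S) * (#Sᶜ)! : ℕ) / (n ! : ℝ) := by
        rw [Nat.cast_sum, sum_div]
    _ ≤ (n ! : ℝ) / n ! := by
        gcongr
        simpa using sum_card_firstPassageOrderings_mul_le (c := c)
    _ = 1 := div_self (by positivity)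

theorem weight_le_one (n : ℕ) (hn : 1 ≤ n) (c : Fin n → ℝ) :
    hyperplaneWeight c ≤ 1 :=
  weight_le_one_general n c
end

section
/- Let n ≥ 1 and let c ∈ ℝ^n satisfy: (i) c_i ≤ 1 for all i, (ii) ∑_{i=1}^n c_i ≥ 1, and (iii) c_i ∈ ℤ for all i. Then the hyperplane h = {x ∈ ℝ^n : ∑_{i=1}^n c_i x_i = 1} has weight w(h) = 1. -/
open Finset

section Aux

variable {α : Type*} [DecidableEq α]

open scoped Classical in
/-- Sum over subsets `S ⊆ A` with `∑_{i∈S} d i = s` of `1 / C(|A|,|S|)`. -/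
noncomputable def Ub (A : Finset α) (d : α → ℤ) (s : ℤ) : ℝ :=
  ∑ S ∈ A.powerset, if (∑ i ∈ S, d i) = s then (1 : ℝ) / (A.card.choose S.card) else 0

open scoped Classical in
/-- Sum over nonempty subsets `S ⊆ A` with `∑_{i∈S} d i = 1` of `1/(|S| C(|A|,|S|))`. -/
noncomputable def Wt (A : Finset α) (d : α → ℤ) : ℝ :=
  ∑ S ∈ A.powerset, if S.Nonempty ∧ (∑ i ∈ S, d i) = 1 then
    (1 : ℝ) / (S.card * (A.card.choose S.card)) else 0

lemma nat_id1 {m k : ℕ} (hk : 1 ≤ k) (hk2 : k ≤ m) :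
    k * m.choose k = m * (m - 1).choose (k - 1) := by
  obtain ⟨k', rfl⟩ : ∃ k', k = k' + 1 := ⟨k - 1, by omega⟩
  obtain ⟨m', rfl⟩ : ∃ m', m = m' + 1 := ⟨m - 1, by omega⟩
  simp only [Nat.add_sub_cancel]
  rw [mul_comm, ← Nat.add_one_mul_choose_eq]

lemma nat_id2 {m k : ℕ} (hm : 1 ≤ m) (hk : k ≤ m - 1) :
    (m - k) * m.choose k = m * (m - 1).choose k := by
  obtain ⟨m', rfl⟩ : ∃ m', m = m' + 1 := ⟨m - 1, by omega⟩
  simp only [Nat.add_sub_cancel] at hk ⊢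
  have h1 : (m' + 1).choose k = (m' + 1).choose (m' + 1 - k) :=
    (Nat.choose_symm (by omega)).symm
  have h2 : (m' + 1 - k) * (m' + 1).choose (m' + 1 - k)
      = (m' + 1) * m'.choose (m' + 1 - k - 1) := nat_id1 (by omega) (by omega)
  have h3 : m' + 1 - k - 1 = m' - k := by omega
  rw [h1, h2, h3, Nat.choose_symm (by omega)]

lemma real_idA {m k : ℕ} (hk1 : 1 ≤ k) (hk : k ≤ m - 1) (hm : 1 ≤ m) :
    (1:ℝ)/(k * m.choose k) = 1/(k * (m-1).choose k) - (1/m) * (1/((m-1).choose k)) := by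
  have hkm : k ≤ m := by omega
  have c1 : (0:ℝ) < m.choose k := by exact_mod_cast Nat.choose_pos hkm
  have c2 : (0:ℝ) < (m-1).choose k := by exact_mod_cast Nat.choose_pos hk
  have hkr : (0:ℝ) < k := by exact_mod_cast hk1
  have hmr : (0:ℝ) < m := by exact_mod_cast hm
  have key : ((m:ℝ) - k) * m.choose k = m * (m-1).choose k := by
    have h : ((m - k : ℕ) : ℝ) * (m.choose k : ℝ) = (m : ℝ) * ((m-1).choose k : ℝ) := by
      exact_mod_cast nat_id2 hm hk
    rw [Nat.cast_sub hkm] at h; exact h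
  rw [one_div_mul_one_div, div_sub_div _ _ (by positivity) (by positivity), div_eq_div_iff (by positivity) (by positivity)]
  linear_combination (-1 * (k:ℝ) * ((m-1).choose k)) * key

lemma real_idB {m k : ℕ} (hk : k ≤ m - 1) (hm : 1 ≤ m) :
    (1:ℝ)/((k+1) * m.choose (k+1)) = (1/m) * (1/((m-1).choose k)) := by
  have key : (k + 1) * m.choose (k+1) = m * (m-1).choose k := by
    have := nat_id1 (k := k + 1) (m := m) (by omega) (by omega)
    simpa using this
  have c2 : (0:ℝ) < (m-1).choose k := by exact_mod_cast Nat.choose_pos hk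
  have hmr : (0:ℝ) < m := by exact_mod_cast hm
  have ckr : (0:ℝ) < ((k:ℝ)+1) * m.choose (k+1) := by
    have : (0:ℝ) < m.choose (k+1) := by exact_mod_cast Nat.choose_pos (by omega)
    positivity
  rw [one_div_mul_one_div]
  congr 1
  have h : ((k + 1) * m.choose (k+1) : ℕ) = ((m * (m-1).choose k : ℕ)) := key
  exact_mod_cast h

lemma real_idC {m k : ℕ} (hk1 : 1 ≤ k) (hk : k ≤ m) :
    (k:ℝ) * (1/((m-1).choose (k-1))) = m * (1/(m.choose k)) := by
  have c1 : (0:ℝ) < m.choose k := by exact_mod_cast Nat.choose_pos hk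
  have c2 : (0:ℝ) < (m-1).choose (k-1) := by
    exact_mod_cast Nat.choose_pos (by omega : k - 1 ≤ m - 1)
  rw [mul_one_div, mul_one_div, div_eq_div_iff (by positivity) (by positivity)]
  exact_mod_cast nat_id1 hk1 hk


lemma Ub_symm (A : Finset α) (d : α → ℤ) (s : ℤ) :
    Ub A d s = Ub A d ((∑ i ∈ A, d i) - s) := by
  classical
  unfold Ub
  refine Finset.sum_bij' (fun S _ => A \ S) (fun S _ => A \ S) ?_ ?_ ?_ ?_ ?_
  · intro S hS
    exact Finset.mem_powerset.mpr (Finset.sdiff_subset)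
  · intro S hS
    exact Finset.mem_powerset.mpr (Finset.sdiff_subset)
  · intro S hS
    exact Finset.sdiff_sdiff_eq_self (Finset.mem_powerset.mp hS)
  · intro S hS
    exact Finset.sdiff_sdiff_eq_self (Finset.mem_powerset.mp hS)
  · intro S hS
    have hSA : S ⊆ A := Finset.mem_powerset.mp hS
    have hcond : ((∑ i ∈ S, d i) = s) ↔ ((∑ i ∈ A \ S, d i) = (∑ i ∈ A, d i) - s) := by
      rw [Finset.sum_sdiff_eq_sub hSA]
      omega
    have hw : ((A.card.choose S.card : ℕ) : ℝ) = ((A.card.choose (A \ S).card : ℕ) : ℝ) := by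
      rw [Finset.card_sdiff_of_subset hSA, Nat.choose_symm (Finset.card_le_card hSA)]
    rw [hw]
    exact if_congr hcond rfl rfl

lemma Ub_erase_eq (A : Finset α) (d : α → ℤ) (s : ℤ) (i : α) (hi : i ∈ A) :
    Ub (A.erase i) d (s - d i)
      = ∑ S ∈ A.powerset, if i ∈ S ∧ (∑ j ∈ S, d j) = s then
          (1:ℝ) / ((A.card - 1).choose (S.card - 1)) else 0 := by
  classical
  have hstep : (∑ S ∈ A.powerset, if i ∈ S ∧ (∑ j ∈ S, d j) = s then
          (1:ℝ) / ((A.card - 1).choose (S.card - 1)) else 0)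
      = ∑ S ∈ A.powerset.filter (fun S => i ∈ S),
          (if (∑ j ∈ S, d j) = s then (1:ℝ) / ((A.card - 1).choose (S.card - 1)) else 0) := by
    rw [Finset.sum_filter]
    refine Finset.sum_congr rfl fun S _ => ?_
    by_cases h1 : i ∈ S <;> by_cases h2 : (∑ j ∈ S, d j) = s <;> simp [h1, h2]
  rw [hstep]
  unfold Ub
  rw [Finset.card_erase_of_mem hi]
  refine Finset.sum_bij' (fun T _ => insert i T) (fun S _ => S.erase i) ?_ ?_ ?_ ?_ ?_
  · intro T hT
    have hTA : T ⊆ A.erase i := Finset.mem_powerset.mp hT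
    refine Finset.mem_filter.mpr ⟨Finset.mem_powerset.mpr ?_, Finset.mem_insert_self i T⟩
    exact Finset.insert_subset hi (hTA.trans (Finset.erase_subset i A))
  · intro S hS
    have hSA : S ⊆ A := Finset.mem_powerset.mp (Finset.mem_filter.mp hS).1
    exact Finset.mem_powerset.mpr (Finset.erase_subset_erase i hSA)
  · intro T hT
    have hiT : i ∉ T := fun h => Finset.notMem_erase i A (Finset.mem_powerset.mp hT h)
    exact Finset.erase_insert hiT
  · intro S hS
    exact Finset.insert_erase (Finset.mem_filter.mp hS).2
  · intro T hT
    have hiT : i ∉ T := fun h => Finset.notMem_erase i A (Finset.mem_powerset.mp hT h)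
    have hcond : ((∑ j ∈ T, d j) = s - d i) ↔ ((∑ j ∈ insert i T, d j) = s) := by
      rw [Finset.sum_insert hiT]
      omega
    have hcard : (insert i T).card - 1 = T.card := by
      rw [Finset.card_insert_of_notMem hiT]; omega
    rw [← hcard]
    exact if_congr hcond rfl rfl

lemma Ub_rel (A : Finset α) (d : α → ℤ) (s : ℤ) (hs : s ≠ 0) :
    ∑ i ∈ A, Ub (A.erase i) d (s - d i) = A.card * Ub A d s := by
  classical
  calc ∑ i ∈ A, Ub (A.erase i) d (s - d i)
      = ∑ i ∈ A, ∑ S ∈ A.powerset, (if i ∈ S ∧ (∑ j ∈ S, d j) = s then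
          (1:ℝ) / ((A.card - 1).choose (S.card - 1)) else 0) :=
        Finset.sum_congr rfl fun i hi => Ub_erase_eq A d s i hi
    _ = ∑ S ∈ A.powerset, ∑ i ∈ A, (if i ∈ S ∧ (∑ j ∈ S, d j) = s then
          (1:ℝ) / ((A.card - 1).choose (S.card - 1)) else 0) := Finset.sum_comm
    _ = ∑ S ∈ A.powerset, (A.card:ℝ) * (if (∑ j ∈ S, d j) = s then
          (1:ℝ) / (A.card.choose S.card) else 0) := by
        refine Finset.sum_congr rfl fun S hS => ?_
        have hSA : S ⊆ A := Finset.mem_powerset.mp hS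
        by_cases hq : (∑ j ∈ S, d j) = s
        · have hinner : ∀ i ∈ A, (if i ∈ S ∧ (∑ j ∈ S, d j) = s then
              (1:ℝ) / ((A.card - 1).choose (S.card - 1)) else 0)
              = (if i ∈ S then (1:ℝ) / ((A.card - 1).choose (S.card - 1)) else 0) := by
            intro i _
            by_cases h1 : i ∈ S <;> simp [h1, hq]
          rw [Finset.sum_congr rfl hinner, Finset.sum_ite_mem,
            Finset.inter_eq_right.mpr hSA, Finset.sum_const, if_pos hq]
          have hne : S.Nonempty := by
            rcases S.eq_empty_or_nonempty with h | h
            · exfalso; rw [h] at hq; simp at hq; omega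
            · exact h
          have hk1 : 1 ≤ S.card := Finset.card_pos.mpr hne
          have hkm : S.card ≤ A.card := Finset.card_le_card hSA
          rw [nsmul_eq_mul]
          exact real_idC hk1 hkm
        · have hinner : ∀ i ∈ A, (if i ∈ S ∧ (∑ j ∈ S, d j) = s then
              (1:ℝ) / ((A.card - 1).choose (S.card - 1)) else 0) = 0 := by
            intro i _; simp [hq]
          rw [Finset.sum_congr rfl hinner, Finset.sum_const, if_neg hq]
          simp
    _ = A.card * Ub A d s := by rw [Ub, Finset.mul_sum]


lemma Ub_const (A : Finset α) : ∀ (d : α → ℤ), (∀ i ∈ A, d i ≤ 1) →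
    ∀ s t : ℤ, 1 ≤ s → s ≤ ∑ i ∈ A, d i → 1 ≤ t → t ≤ ∑ i ∈ A, d i →
    Ub A d s = Ub A d t := by
  classical
  induction A using Finset.strongInduction with
  | _ A IH =>
    intro d hd s t hs1 hs2 ht1 ht2
    have adj : ∀ u : ℤ, 1 ≤ u → u + 1 ≤ ∑ i ∈ A, d i → Ub A d u = Ub A d (u + 1) := by
      intro u hu1 hu2
      have hApos : 0 < A.card := by
        rcases A.eq_empty_or_nonempty with h | h
        · exfalso; rw [h] at hu2; simp at hu2; omega
        · exact Finset.card_pos.mpr h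
      have key : (A.card : ℝ) * (Ub A d u - Ub A d (u+1)) = 0 := by
        rw [mul_sub, ← Ub_rel A d u (by omega), ← Ub_rel A d (u+1) (by omega),
          ← Finset.sum_sub_distrib]
        apply Finset.sum_eq_zero
        intro i hi
        have hsub : A.erase i ⊂ A := Finset.erase_ssubset hi
        have hd' : ∀ j ∈ A.erase i, d j ≤ 1 := fun j hj => hd j (Finset.mem_of_mem_erase hj)
        have hS' : ∑ j ∈ A.erase i, d j = (∑ j ∈ A, d j) - d i := by
          rw [← Finset.sum_erase_add A d hi]; ring
        have hdi : d i ≤ 1 := hd i hi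
        by_cases hcase : 1 ≤ u - d i
        · have h1 : Ub (A.erase i) d (u - d i) = Ub (A.erase i) d (u + 1 - d i) :=
            IH _ hsub d hd' _ _ hcase (by omega) (by omega) (by omega)
          rw [h1]; ring_nf
        · have e0 : u - d i = 0 := by omega
          have e1 : u + 1 - d i = 1 := by omega
          rw [e0, e1]
          have hS1 : 1 ≤ ∑ j ∈ A.erase i, d j := by omega
          have hsym : Ub (A.erase i) d 0 = Ub (A.erase i) d (∑ j ∈ A.erase i, d j) := by
            have := Ub_symm (A.erase i) d 0
            simpa using this
          have hmain : Ub (A.erase i) d 0 = Ub (A.erase i) d 1 := by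
            by_cases hq : (∑ j ∈ A.erase i, d j) = 1
            · rw [hsym, hq]
            · have h2 : Ub (A.erase i) d (∑ j ∈ A.erase i, d j) = Ub (A.erase i) d 1 :=
                IH _ hsub d hd' _ 1 hS1 le_rfl le_rfl hS1
              rw [hsym, h2]
          rw [hmain]; ring
      have hA : (A.card : ℝ) ≠ 0 := Nat.cast_ne_zero.mpr (by omega)
      have := mul_eq_zero.mp key
      rcases this with h | h
      · exact absurd h hA
      · linarith [h]
    have chain : ∀ (j : ℕ) (u : ℤ), 1 ≤ u → u + j ≤ ∑ i ∈ A, d i →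
        Ub A d u = Ub A d (u + j) := by
      intro j
      induction j with
      | zero => intro u _ _; norm_num
      | succ n ihn =>
        intro u hu1 hu2
        have hn : ((n + 1 : ℕ) : ℤ) = (n : ℤ) + 1 := by push_cast; ring
        have h1 : Ub A d u = Ub A d (u + 1) := adj u hu1 (by omega)
        have h2 : Ub A d (u + 1) = Ub A d (u + 1 + n) := ihn (u+1) (by omega) (by omega)
        rw [h1, h2]; congr 1; omega
    rcases le_total s t with h | h
    · have h0 : s + ((t - s).toNat : ℤ) ≤ ∑ i ∈ A, d i := by
        rw [Int.toNat_of_nonneg (by omega)]; omega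
      have := chain (t - s).toNat s hs1 h0
      rw [this]; congr 1; rw [Int.toNat_of_nonneg (by omega)]; ring
    · have h0 : t + ((s - t).toNat : ℤ) ≤ ∑ i ∈ A, d i := by
        rw [Int.toNat_of_nonneg (by omega)]; omega
      have := chain (s - t).toNat t ht1 h0
      rw [this]; congr 1; rw [Int.toNat_of_nonneg (by omega)]; ring


lemma Wt_rec (A : Finset α) (d : α → ℤ) (i : α) (hi : i ∈ A) :
    Wt A d = Wt (A.erase i) d
      + (1/(A.card:ℝ)) * (Ub (A.erase i) d (1 - d i) - Ub (A.erase i) d 1) := by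
  classical
  have hiA' : i ∉ A.erase i := Finset.notMem_erase i A
  have hins : insert i (A.erase i) = A := Finset.insert_erase hi
  have hm : 1 ≤ A.card := Finset.card_pos.mpr ⟨i, hi⟩
  have hcard' : (A.erase i).card = A.card - 1 := Finset.card_erase_of_mem hi
  have expand : Wt A d
      = (∑ T ∈ (A.erase i).powerset, if T.Nonempty ∧ (∑ j ∈ T, d j) = 1 then
          (1:ℝ)/(T.card * (A.card.choose T.card)) else 0)
      + ∑ T ∈ (A.erase i).powerset,
          (if (insert i T).Nonempty ∧ (∑ j ∈ insert i T, d j) = 1 then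
            (1:ℝ)/((insert i T).card * (A.card.choose (insert i T).card)) else 0) := by
    rw [Wt, ← hins, Finset.sum_powerset_insert hiA', hins]
  have partA : (∑ T ∈ (A.erase i).powerset, if T.Nonempty ∧ (∑ j ∈ T, d j) = 1 then
          (1:ℝ)/(T.card * (A.card.choose T.card)) else 0)
      = Wt (A.erase i) d - (1/(A.card:ℝ)) * Ub (A.erase i) d 1 := by
    rw [Wt, Ub, Finset.mul_sum, ← Finset.sum_sub_distrib]
    refine Finset.sum_congr rfl fun T hT => ?_
    by_cases hq : (∑ j ∈ T, d j) = 1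
    · have hne : T.Nonempty := by
        rcases T.eq_empty_or_nonempty with h | h
        · exfalso; rw [h] at hq; simp at hq
        · exact h
      rw [if_pos ⟨hne, hq⟩, if_pos ⟨hne, hq⟩, if_pos hq, hcard']
      exact real_idA (Finset.card_pos.mpr hne)
        (hcard' ▸ Finset.card_le_card (Finset.mem_powerset.mp hT)) hm
    · have hq2 : ¬(T.Nonempty ∧ (∑ j ∈ T, d j) = 1) := fun h => hq h.2
      rw [if_neg hq2, if_neg hq2, if_neg hq]
      ring
  have partB : (∑ T ∈ (A.erase i).powerset,
          (if (insert i T).Nonempty ∧ (∑ j ∈ insert i T, d j) = 1 then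
            (1:ℝ)/((insert i T).card * (A.card.choose (insert i T).card)) else 0))
      = (1/(A.card:ℝ)) * Ub (A.erase i) d (1 - d i) := by
    rw [Ub, Finset.mul_sum]
    refine Finset.sum_congr rfl fun T hT => ?_
    have hiT : i ∉ T := fun h => hiA' (Finset.mem_powerset.mp hT h)
    rw [Finset.sum_insert hiT, Finset.card_insert_of_notMem hiT, hcard']
    by_cases hq : (∑ j ∈ T, d j) = 1 - d i
    · have hc : d i + ∑ j ∈ T, d j = 1 := by omega
      rw [if_pos ⟨Finset.insert_nonempty i T, hc⟩, if_pos hq]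
      have hkb : T.card ≤ A.card - 1 :=
        hcard' ▸ Finset.card_le_card (Finset.mem_powerset.mp hT)
      have := real_idB hkb hm
      rw [mul_one_div] at this ⊢
      rw [← this]
      push_cast
      ring_nf
    · have hc : ¬((insert i T).Nonempty ∧ d i + ∑ j ∈ T, d j = 1) := by
        rintro ⟨-, h⟩; omega
      rw [if_neg hc, if_neg hq]
      ring
  rw [expand, partA, partB]
  ring

lemma Wt_ones (A : Finset α) (hA : A.Nonempty) (d : α → ℤ) (h1 : ∀ i ∈ A, d i = 1) :
    Wt A d = 1 := by
  classical
  have hm : 0 < A.card := Finset.card_pos.mpr hA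
  have hterm : ∀ S ∈ A.powerset,
      (if S.Nonempty ∧ (∑ i ∈ S, d i) = 1 then
        (1:ℝ)/(S.card * (A.card.choose S.card)) else 0)
      = (if S.card = 1 then (1:ℝ)/(A.card:ℝ) else 0) := by
    intro S hS
    have hSA : S ⊆ A := Finset.mem_powerset.mp hS
    have hsum : (∑ i ∈ S, d i) = S.card := by
      rw [Finset.sum_congr rfl (fun i hiS => h1 i (hSA hiS))]
      simp
    by_cases hc : S.card = 1
    · have hne : S.Nonempty := Finset.card_pos.mp (by omega)
      have hcond : S.Nonempty ∧ (∑ i ∈ S, d i) = 1 := ⟨hne, by rw [hsum, hc]; norm_num⟩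
      rw [if_pos hcond, if_pos hc, hc, Nat.choose_one_right]
      norm_num
    · have hcond : ¬(S.Nonempty ∧ (∑ i ∈ S, d i) = 1) := by
        rintro ⟨hne, hs1⟩
        rw [hsum] at hs1
        exact hc (by exact_mod_cast hs1)
      rw [if_neg hcond, if_neg hc]
  rw [Wt, Finset.sum_congr rfl hterm, ← Finset.sum_filter]
  rw [← Finset.powersetCard_eq_filter, Finset.sum_const, Finset.card_powersetCard,
    Nat.choose_one_right, nsmul_eq_mul]
  field_simp

lemma Wt_eq_one (A : Finset α) : ∀ (d : α → ℤ), (∀ i ∈ A, d i ≤ 1) →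
    1 ≤ ∑ i ∈ A, d i → Wt A d = 1 := by
  classical
  induction A using Finset.strongInduction with
  | _ A IH =>
    intro d hd hsum
    have hA : A.Nonempty := by
      rcases A.eq_empty_or_nonempty with h | h
      · exfalso; rw [h] at hsum; simp at hsum
      · exact h
    by_cases hall : ∀ i ∈ A, d i = 1
    · exact Wt_ones A hA d hall
    · push_neg at hall
      obtain ⟨i, hi, hne⟩ := hall
      have hdi : d i ≤ 0 := by have := hd i hi; omega
      have hS' : ∑ j ∈ A.erase i, d j = (∑ j ∈ A, d j) - d i := by
        rw [← Finset.sum_erase_add A d hi]; ring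
      have hd' : ∀ j ∈ A.erase i, d j ≤ 1 := fun j hj => hd j (Finset.mem_of_mem_erase hj)
      rw [Wt_rec A d i hi]
      have hconst : Ub (A.erase i) d (1 - d i) = Ub (A.erase i) d 1 :=
        Ub_const (A.erase i) d hd' (1 - d i) 1 (by omega) (by omega) (by omega) (by omega)
      rw [hconst, sub_self, mul_zero, add_zero]
      exact IH (A.erase i) (Finset.erase_ssubset hi) d hd' (by omega)

end Aux

theorem weight_eq_one_of_conditions (n : ℕ) (hn : 1 ≤ n) (c : Fin n → ℝ)
    (h1 : ∀ i, c i ≤ 1) (h2 : 1 ≤ ∑ i, c i)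
    (h3 : ∀ i, ∃ m : ℤ, (m : ℝ) = c i) :
    hyperplaneWeight c = 1 := by
  classical
  choose d hdspec using h3
  have hd1 : ∀ i, d i ≤ 1 := by
    intro i
    have : (d i : ℝ) ≤ 1 := by rw [hdspec i]; exact h1 i
    exact_mod_cast this
  have hsum : 1 ≤ ∑ i, d i := by
    have h : ((∑ i, d i : ℤ) : ℝ) = ∑ i, c i := by
      push_cast
      exact Finset.sum_congr rfl fun i _ => hdspec i
    have : (1:ℝ) ≤ ((∑ i, d i : ℤ) : ℝ) := by rw [h]; exact h2
    exact_mod_cast this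
  have hW : hyperplaneWeight c = Wt (Finset.univ : Finset (Fin n)) d := by
    rw [hyperplaneWeight, Wt, Finset.powerset_univ]
    refine Finset.sum_congr rfl fun S _ => ?_
    have hcond : ((∑ i ∈ S, c i) = 1) ↔ ((∑ i ∈ S, d i) = 1) := by
      have h : ((∑ i ∈ S, d i : ℤ) : ℝ) = ∑ i ∈ S, c i := by
        push_cast
        exact Finset.sum_congr rfl fun i _ => hdspec i
      rw [← h]
      exact_mod_cast Iff.rfl
    have hcard : (Finset.univ : Finset (Fin n)).card = n := by simp
    rw [hcard]
    exact if_congr (and_congr_right fun _ => hcond) rfl rfl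
  rw [hW]
  exact Wt_eq_one Finset.univ d (fun i _ => hd1 i) (by simpa using hsum)
end

section
/- Let n ≥ 2 and let α ∈ ℝ with α ∉ {−(n−2), −(n−3), …, −1, 0, 1} (i.e., α is not an integer in the interval [−(n−2), 1]). Then the hyperplane h_α = {x ∈ ℝ^n : α x_1 + ∑_{i=2}^n x_i = 1} has weight w(h_α) = 1 − 1/n. -/
/-!
Write `c = e + (α - 1) e₁`, with `e` the all-ones vector. A cube point `1_S` with `1 ∉ S` lies on
`h_α` iff `|S| = 1`, and one with `1 ∈ S` iff `α = 2 - |S|`, which the hypothesis on `α` excludes.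
So the points of `h_α` are the `n - 1` unit vectors `e_i`, `i ≠ 1`, each of weight `1 / (1 · n)`.
-/

open Finset

variable {n : ℕ}

theorem hyperplaneWeight_eq_card_div_of_points_eq_singletons (c : Fin n → ℝ)
    (T : Finset (Fin n))
    (hc : ∀ S : Finset (Fin n), S.Nonempty ∧ ∑ i ∈ S, c i = 1 ↔ ∃ i ∈ T, S = {i}) :
    hyperplaneWeight c = T.card / n := by
  have hpoints : univ.filter (fun S : Finset (Fin n) => S.Nonempty ∧ ∑ i ∈ S, c i = 1)
      = T.map ⟨singleton, singleton_injective⟩ := by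
    ext S
    simp [hc, eq_comm]
  rw [hyperplaneWeight, ← sum_filter, hpoints, sum_map]
  simp [div_eq_mul_inv]

theorem sum_update_one_of_mem {ι : Type*} [DecidableEq ι] {S : Finset ι} {i₀ : ι} (h : i₀ ∈ S)
    (α : ℝ) : ∑ i ∈ S, Function.update (1 : ι → ℝ) i₀ α i = α + (S.card - 1) := by
  rw [← add_sum_erase _ _ h, Function.update_self,
    sum_congr rfl fun i hi => Function.update_of_ne (ne_of_mem_erase hi) _ _]
  simp [card_erase_of_mem h, Nat.cast_pred (card_pos.mpr ⟨i₀, h⟩)]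

theorem sum_update_one_of_notMem {ι : Type*} [DecidableEq ι] {S : Finset ι} {i₀ : ι} (h : i₀ ∉ S)
    (α : ℝ) : ∑ i ∈ S, Function.update (1 : ι → ℝ) i₀ α i = S.card := by
  simp [sum_update_of_notMem h]

theorem nonempty_and_sum_update_one_eq_one_iff (i₀ : Fin n) {α : ℝ}
    (hα : ∀ m : ℤ, -((n : ℤ) - 2) ≤ m → m ≤ 1 → α ≠ (m : ℝ)) (S : Finset (Fin n)) :
    S.Nonempty ∧ ∑ i ∈ S, Function.update (1 : Fin n → ℝ) i₀ α i = 1 ↔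
      ∃ i ∈ univ.erase i₀, S = {i} := by
  by_cases h : i₀ ∈ S
  · rw [sum_update_one_of_mem h]
    refine iff_of_false (fun ⟨hS, hsum⟩ => ?_) fun ⟨i, hi, hSi⟩ => ?_
    · have hcard : S.card ≤ n := by simpa using card_le_univ S
      exact hα (2 - S.card) (by omega) (by have := hS.card_pos; omega) (by push_cast; linarith)
    · rw [hSi, mem_singleton] at h
      exact ne_of_mem_erase hi h.symm
  · rw [sum_update_one_of_notMem h, Nat.cast_eq_one]
    constructor
    · rintro ⟨-, hcard⟩
      obtain ⟨i, rfl⟩ := card_eq_one.mp hcard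
      exact ⟨i, mem_erase.mpr ⟨by rintro rfl; simp at h, mem_univ i⟩, rfl⟩
    · rintro ⟨i, -, rfl⟩
      simp

theorem weight_alpha_hyperplane (n : ℕ) (hn : 2 ≤ n) (α : ℝ)
    (hα : ∀ m : ℤ, -((n : ℤ) - 2) ≤ m → m ≤ 1 → α ≠ (m : ℝ)) :
    hyperplaneWeight (fun i : Fin n => if (i : ℕ) = 0 then α else 1) = 1 - 1 / n := by
  have hc : (fun i : Fin n => if (i : ℕ) = 0 then α else 1)
      = Function.update (1 : Fin n → ℝ) ⟨0, by omega⟩ α := by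
    funext i
    simp [Function.update_apply, Fin.ext_iff]
  rw [hc, hyperplaneWeight_eq_card_div_of_points_eq_singletons _ _
      (nonempty_and_sum_update_one_eq_one_iff _ hα), card_erase_of_mem (mem_univ _), card_univ,
    Fintype.card_fin, Nat.cast_sub (by omega), Nat.cast_one]
  field_simp
end

section
/- Let n ≥ 1, r ≥ 1, and let c ∈ ℝ^n define the hyperplane h = {x ∈ ℝ^n : ∑_{i=1}^n c_i x_i = 1} with weight w(h) > 1 − r/n. Then the number of indices i with c_i > 1 is at most r − 1. -/
/-!
For a uniformly random ordering `σ` of `[n]`, the weight `1 / (|S| binom(n, |S|))` of `S` is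
`P(σ lists S first) / |S|`. If `∑_{i ∈ S} c i = 1`, the cycle lemma shows that among the `|S|`
cyclic rotations of the first `|S|` positions of `σ` at least one keeps every proper prefix sum
below `1`; such an ordering determines `S` as its first prefix of sum `1`, and begins with some
`i` with `c i ≤ 1`. Hence `w(h) ≤ P(c (σ 0) ≤ 1) = 1 - b / n` with `b = #{i | 1 < c i}`, and
`1 - r / n < w(h)` forces `b < r`.
-/

open Finset Equiv Fin.NatCast

theorem cycle_lemma {α : Type*} [AddCommMonoid α] [LinearOrder α] [IsOrderedCancelAddMonoid α]
    {f : ℕ → α} {t : ℕ} {a : α} (ht : 0 < t) (ha : 0 < a) (hf : ∀ m, f (m + t) = f m + a) :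
    ∃ k < t, ∀ m, k < m → m < k + t → f m < f k + a := by
  -- `k` is the first maximiser of `f` on `[0, t)`.
  obtain ⟨k₀, hk₀, hmax⟩ := exists_max_image (range t) f ⟨0, mem_range.2 ht⟩
  have hex : ∃ k, f k = f k₀ := ⟨k₀, rfl⟩
  have hk : Nat.find hex < t := (Nat.find_min' hex rfl).trans_lt (mem_range.1 hk₀)
  refine ⟨Nat.find hex, hk, fun m hkm hmt => ?_⟩
  rw [Nat.find_spec hex]
  rcases lt_or_ge m t with hm | hm
  · exact (hmax m (mem_range.2 hm)).trans_lt (lt_add_of_pos_right _ ha)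
  · obtain ⟨m', rfl⟩ := Nat.exists_eq_add_of_le' hm
    have hm' : m' < Nat.find hex := by omega
    rw [hf]
    exact add_lt_add_left ((hmax m' (mem_range.2 (hm'.trans hk))).lt_of_ne
      (Nat.find_min hex hm')) a

theorem card_mul_card_filter_perm_apply {α : Type*} [Fintype α] [DecidableEq α]
    (Q : α → Prop) [DecidablePred Q] (a : α) :
    Fintype.card α * #{σ : Perm α | Q (σ a)} = #{x | Q x} * (Fintype.card α).factorial := by
  have hsymm : ∀ b, #{σ : Perm α | Q (σ b)} = #{σ : Perm α | Q (σ a)} := fun b =>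
    card_equiv (Equiv.mulRight (swap a b)) (by simp [Perm.mul_apply])
  calc Fintype.card α * #{σ : Perm α | Q (σ a)} = ∑ b, #{σ : Perm α | Q (σ b)} := by
        simp [hsymm]
    _ = ∑ σ : Perm α, #{b | Q (σ b)} := by
        simp only [card_filter]; exact sum_comm
    _ = #{x | Q x} * (Fintype.card α).factorial := by
        simp [fun σ : Perm α => card_equiv σ (s := {b | Q (σ b)}) (t := {x | Q x}) (by simp),
          Fintype.card_perm, mul_comm]

variable {n : ℕ}

def ListsFirst (σ : Perm (Fin n)) (S : Finset (Fin n)) : Prop :=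
  ∀ p, σ p ∈ S ↔ (p : ℕ) < #S

instance (σ : Perm (Fin n)) (S : Finset (Fin n)) : Decidable (ListsFirst σ S) := by
  unfold ListsFirst; infer_instance

theorem ListsFirst.mul_right {σ ρ : Perm (Fin n)} {S : Finset (Fin n)} (h : ListsFirst σ S)
    (hρ : ∀ p, (ρ p : ℕ) < #S ↔ (p : ℕ) < #S) : ListsFirst (σ * ρ) S :=
  fun p => (h (ρ p)).trans (hρ p)

theorem Fin.card_subtype_val_lt {t : ℕ} (ht : t ≤ n) :
    Fintype.card {p : Fin n // (p : ℕ) < t} = t := by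
  simpa [Fintype.card_subtype, Fin.card_filter_val_lt] using ht

theorem Fin.card_subtype_not_val_lt {t : ℕ} (ht : t ≤ n) :
    Fintype.card {p : Fin n // ¬ (p : ℕ) < t} = n - t := by
  rw [Fintype.card_subtype_compl, Fin.card_subtype_val_lt ht, Fintype.card_fin]

theorem exists_listsFirst (S : Finset (Fin n)) : ∃ σ : Perm (Fin n), ListsFirst σ S := by
  have e₁ : {p : Fin n // (p : ℕ) < #S} ≃ S :=
    Fintype.equivOfCardEq (by simp [Fin.card_subtype_val_lt (card_finset_fin_le S)])
  have e₂ : {p : Fin n // ¬ (p : ℕ) < #S} ≃ {x // x ∉ S} :=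
    Fintype.equivOfCardEq <| by
      rw [Fin.card_subtype_not_val_lt (card_finset_fin_le S), Fintype.card_subtype_compl]; simp
  refine ⟨subtypeCongr e₁ e₂, fun p => ?_⟩
  by_cases hp : (p : ℕ) < #S
  · simp [subtypeCongr, hp, sumCompl_symm_apply_of_pos]
  · simpa [subtypeCongr, hp, sumCompl_symm_apply_of_neg] using (e₂ ⟨p, hp⟩).2

theorem factorial_mul_factorial_le_card_listsFirst (S : Finset (Fin n)) :
    (#S).factorial * (n - #S).factorial ≤ #{σ : Perm (Fin n) | ListsFirst σ S} := by
  obtain ⟨σ₀, h₀⟩ := exists_listsFirst S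
  let P : Fin n → Prop := fun p => (p : ℕ) < #S
  calc (#S).factorial * (n - #S).factorial
      = Fintype.card (Perm {p // P p} × Perm {p // ¬ P p}) := by
        simp only [Fintype.card_prod, Fintype.card_perm, P,
          Fin.card_subtype_val_lt (card_finset_fin_le S),
          Fin.card_subtype_not_val_lt (card_finset_fin_le S)]
    _ ≤ _ := by
        rw [← card_univ]
        refine card_le_card_of_injOn (fun τ => σ₀ * Perm.subtypeCongrHom P τ) (fun τ _ => ?_)
          ((mul_right_injective σ₀).comp (Perm.subtypeCongrHom_injective P)).injOn
        refine mem_filter.2 ⟨mem_univ _, h₀.mul_right fun p => ?_⟩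
        by_cases hp : P p
        · rw [Perm.subtypeCongrHom_apply, Perm.subtypeCongr.left_apply _ _ hp]
          exact iff_of_true (τ.1 ⟨p, hp⟩).2 hp
        · rw [Perm.subtypeCongrHom_apply, Perm.subtypeCongr.right_apply _ _ hp]
          exact iff_of_false (τ.2 ⟨p, hp⟩).2 hp

section
variable [NeZero n]

-- `(i : Fin n)` is `i % n`; prefix sums are only used up to `j ≤ n`.
def prefixSum (c : Fin n → ℝ) (σ : Perm (Fin n)) (j : ℕ) : ℝ :=
  ∑ i ∈ range j, c (σ i)

theorem ListsFirst.prefixSum_card {σ : Perm (Fin n)} {S : Finset (Fin n)} (h : ListsFirst σ S)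
    (c : Fin n → ℝ) : prefixSum c σ #S = ∑ x ∈ S, c x := by
  have hval : ∀ i ∈ range #S, ((i : Fin n) : ℕ) = i := fun i hi =>
    Fin.val_cast_of_lt ((mem_range.1 hi).trans_le (card_finset_fin_le S))
  refine sum_nbij (fun i => σ i) (fun i hi => (h _).2 ?_) (fun i hi i' hi' hii' => ?_)
    (fun x hx => ⟨σ.symm x, mem_range.2 ((h _).1 (by simpa using hx)), by simp⟩) (fun _ _ => rfl)
  · exact (hval i hi).symm ▸ mem_range.1 hi
  · rw [← hval i hi, ← hval i' hi', σ.injective hii']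

-- The cycle `(0 1 ⋯ t-1)`: `σ * shiftInit n t ^ k` lists `σ k, σ (k + 1), …` cyclically in its
-- first `t` positions.
def shiftInit (n t : ℕ) [NeZero n] : Perm (Fin n) :=
  Fin.cycleRange ((t - 1 : ℕ) : Fin n)

theorem shiftInit_pow_natCast {t i : ℕ} (ht : t ≤ n) (hi : i < t) (k : ℕ) :
    (shiftInit n t ^ k) (i : Fin n) = (((i + k) % t : ℕ) : Fin n) := by
  induction k with
  | zero => simp [Nat.mod_eq_of_lt hi]
  | succ k ih =>
    have hlt : (i + k) % t < t := Nat.mod_lt _ (by omega)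
    have hsucc : (i + (k + 1)) % t = if (i + k) % t = t - 1 then 0 else (i + k) % t + 1 := by
      rw [← Nat.add_assoc, ← Nat.mod_add_mod]
      split_ifs with h
      · rw [h, Nat.sub_add_cancel (by omega), Nat.mod_self]
      · exact Nat.mod_eq_of_lt (by omega)
    have ht₁ : t - 1 < n := by omega
    rw [pow_succ', Perm.mul_apply, ih, shiftInit]
    apply Fin.ext
    have hm : (i + k) % t < n := hlt.trans_le ht
    rw [Fin.coe_cycleRange_of_le
      (by rw [Fin.le_def, Fin.val_cast_of_lt ht₁, Fin.val_cast_of_lt hm]; omega), hsucc]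
    simp only [Fin.ext_iff, Fin.val_cast_of_lt ht₁, Fin.val_cast_of_lt hm]
    split_ifs
    · rfl
    · rw [Fin.val_cast_of_lt (by omega)]

theorem shiftInit_pow_val_lt_iff {t : ℕ} (ht : t ≤ n) (k : ℕ) (p : Fin n) :
    ((shiftInit n t ^ k) p : ℕ) < t ↔ (p : ℕ) < t := by
  by_cases hp : (p : ℕ) < t
  · have ht₀ : 0 < t := by omega
    have hpow := shiftInit_pow_natCast ht hp k
    rw [Fin.cast_val_eq_self] at hpow
    rw [hpow, Fin.val_cast_of_lt ((Nat.mod_lt _ ht₀).trans_le ht)]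
    exact iff_of_true (Nat.mod_lt _ ht₀) hp
  · rcases Nat.eq_zero_or_pos t with rfl | ht₀
    · simp
    rw [shiftInit, Perm.pow_apply_eq_self_of_apply_eq_self (Fin.cycleRange_of_gt ?_)]
    rw [Fin.lt_def, Fin.val_cast_of_lt (by omega)]
    omega

theorem ListsFirst.exists_prefixSum_lt_one {σ : Perm (Fin n)} {S : Finset (Fin n)}
    (h : ListsFirst σ S) (hS : S.Nonempty) {c : Fin n → ℝ} (hc : ∑ x ∈ S, c x = 1) :
    ∃ k < #S, ∀ j < #S, 0 < j → prefixSum c (σ * shiftInit n #S ^ k) j < 1 := by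
  set t := #S
  have ht : 0 < t := card_pos.2 hS
  have htn : t ≤ n := card_finset_fin_le S
  let d : ℕ → ℝ := fun m => c (σ (m % t : ℕ))
  let f : ℕ → ℝ := fun j => ∑ i ∈ range j, d i
  have hft : f t = 1 := by
    rw [← hc, ← h.prefixSum_card]
    exact sum_congr rfl fun i hi => by simp only [d, Nat.mod_eq_of_lt (mem_range.1 hi : i < t)]
  have hf : ∀ m, f (m + t) = f m + 1 := fun m => by
    rw [add_comm m, add_comm (f m), ← hft]
    simp only [f, sum_range_add, d, Nat.add_mod_left]
  obtain ⟨k, hk, hlt⟩ := cycle_lemma ht one_pos hf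
  refine ⟨k, hk, fun j hjt hj₀ => ?_⟩
  have hsplit : f (k + j) = f k + prefixSum c (σ * shiftInit n t ^ k) j := by
    simp only [f, sum_range_add, prefixSum]
    congr 1
    refine sum_congr rfl fun i hi => ?_
    rw [Perm.mul_apply, shiftInit_pow_natCast htn (by simp at hi; omega), add_comm i k]
  linarith [hlt (k + j) (by omega) (by omega)]

-- When `∑ x ∈ S, c x = 1`: `S` is the first prefix of `σ` with sum `1`.
def IsFirstHit (c : Fin n → ℝ) (σ : Perm (Fin n)) (S : Finset (Fin n)) : Prop :=
  ListsFirst σ S ∧ ∀ j < #S, 0 < j → prefixSum c σ j < 1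

noncomputable instance (c : Fin n → ℝ) (σ : Perm (Fin n)) (S : Finset (Fin n)) :
    Decidable (IsFirstHit c σ S) := by
  unfold IsFirstHit; infer_instance

theorem card_listsFirst_le_card_mul_card_isFirstHit {S : Finset (Fin n)} (hS : S.Nonempty)
    {c : Fin n → ℝ} (hc : ∑ x ∈ S, c x = 1) :
    #{σ : Perm (Fin n) | ListsFirst σ S} ≤ #S * #{σ | IsFirstHit c σ S} := by
  have htn : #S ≤ n := card_finset_fin_le S
  calc #{σ : Perm (Fin n) | ListsFirst σ S}
      ≤ #((range #S).biUnion fun k =>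
          ({σ | IsFirstHit c σ S} : Finset (Perm (Fin n))).image (· * (shiftInit n #S ^ k)⁻¹)) := by
        refine card_le_card fun σ hσ => ?_
        obtain ⟨k, hk, hlt⟩ := (mem_filter.1 hσ).2.exists_prefixSum_lt_one hS hc
        refine mem_biUnion.2 ⟨k, mem_range.2 hk,
          mem_image.2 ⟨σ * shiftInit n #S ^ k, mem_filter.2 ⟨mem_univ _, ?_, hlt⟩, by simp⟩⟩
        exact (mem_filter.1 hσ).2.mul_right (shiftInit_pow_val_lt_iff htn k)
    _ ≤ #S * #{σ | IsFirstHit c σ S} := by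
        refine (card_biUnion_le_card_mul _ _ #{σ | IsFirstHit c σ S}
          fun k _ => card_image_le).trans ?_
        rw [card_range]

theorem factorial_le_card_mul_choose_mul_card_isFirstHit {S : Finset (Fin n)} (hS : S.Nonempty)
    {c : Fin n → ℝ} (hc : ∑ x ∈ S, c x = 1) :
    n.factorial ≤ #S * n.choose #S * #{σ | IsFirstHit c σ S} := by
  have htn : #S ≤ n := card_finset_fin_le S
  calc n.factorial = n.choose #S * ((#S).factorial * (n - #S).factorial) := by
        rw [← mul_assoc, Nat.choose_mul_factorial_mul_factorial htn]
    _ ≤ n.choose #S * (#S * #{σ | IsFirstHit c σ S}) := by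
        exact Nat.mul_le_mul_left _ <| (factorial_mul_factorial_le_card_listsFirst S).trans
          (card_listsFirst_le_card_mul_card_isFirstHit hS hc)
    _ = #S * n.choose #S * #{σ | IsFirstHit c σ S} := by ring

theorem IsFirstHit.apply_zero_le {c : Fin n → ℝ} {σ : Perm (Fin n)} {S : Finset (Fin n)}
    (h : IsFirstHit c σ S) (hS : S.Nonempty) (hc : ∑ x ∈ S, c x = 1) : c (σ 0) ≤ 1 := by
  have h₁ : prefixSum c σ 1 = c (σ 0) := by simp [prefixSum]
  rcases (Nat.one_le_iff_ne_zero.2 (card_pos.2 hS).ne').eq_or_lt with hS₁ | hS₁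
  · rw [← h₁, hS₁, h.1.prefixSum_card, hc]
  · exact h₁ ▸ (h.2 1 hS₁ one_pos).le

theorem IsFirstHit.unique {c : Fin n → ℝ} {σ : Perm (Fin n)} {S S' : Finset (Fin n)}
    (h : IsFirstHit c σ S) (h' : IsFirstHit c σ S') (hS : S.Nonempty) (hS' : S'.Nonempty)
    (hc : ∑ x ∈ S, c x = 1) (hc' : ∑ x ∈ S', c x = 1) : S = S' := by
  have hcard : #S = #S' := by
    rcases lt_trichotomy #S #S' with hlt | heq | hgt
    · exact absurd (h.1.prefixSum_card c ▸ hc) (h'.2 _ hlt (card_pos.2 hS)).ne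
    · exact heq
    · exact absurd (h'.1.prefixSum_card c ▸ hc') (h.2 _ hgt (card_pos.2 hS')).ne
  ext x
  have h₁ := h.1 (σ.symm x)
  have h₂ := h'.1 (σ.symm x)
  rw [apply_symm_apply] at h₁ h₂
  rw [h₁, h₂, hcard]

theorem sum_card_isFirstHit_le (c : Fin n → ℝ) :
    ∑ S : Finset (Fin n) with S.Nonempty ∧ ∑ i ∈ S, c i = 1, #{σ | IsFirstHit c σ S} ≤
      #{σ : Perm (Fin n) | c (σ 0) ≤ 1} := by
  rw [← card_biUnion]
  · refine card_le_card fun σ hσ => ?_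
    obtain ⟨S, hS, hσS⟩ := mem_biUnion.1 hσ
    exact mem_filter.2 ⟨mem_univ _,
      (mem_filter.1 hσS).2.apply_zero_le (mem_filter.1 hS).2.1 (mem_filter.1 hS).2.2⟩
  · intro S hS S' hS' hne
    refine disjoint_left.2 fun σ hσ hσ' => hne ?_
    exact (mem_filter.1 hσ).2.unique (mem_filter.1 hσ').2 (mem_filter.1 hS).2.1
      (mem_filter.1 hS').2.1 (mem_filter.1 hS).2.2 (mem_filter.1 hS').2.2

theorem natCast_mul_card_apply_zero_le_one (c : Fin n → ℝ) :
    (n : ℝ) * #{σ : Perm (Fin n) | c (σ 0) ≤ 1} = (n - #{i | 1 < c i}) * n.factorial := by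
  have hfirst := card_mul_card_filter_perm_apply (fun x => c x ≤ 1) (0 : Fin n)
  have hsplit := card_filter_add_card_filter_not (s := univ) (fun i => 1 < c i)
  simp only [not_lt, card_univ, Fintype.card_fin] at hfirst hsplit
  rw [← eq_sub_of_add_eq'
    (by exact_mod_cast hsplit : (#{i | 1 < c i} + #{i | c i ≤ 1} : ℝ) = n)]
  exact_mod_cast hfirst

theorem hyperplaneWeight_le (c : Fin n → ℝ) :
    hyperplaneWeight c ≤ 1 - #{i | 1 < c i} / n := by
  have hn : (0 : ℝ) < n := Nat.cast_pos.2 (NeZero.pos n)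
  have hfac : (0 : ℝ) < n.factorial := Nat.cast_pos.2 n.factorial_pos
  calc hyperplaneWeight c
      = ∑ S : Finset (Fin n) with S.Nonempty ∧ ∑ i ∈ S, c i = 1, 1 / (#S * n.choose #S : ℝ) := by
        rw [hyperplaneWeight, sum_filter]
    _ ≤ ∑ S : Finset (Fin n) with S.Nonempty ∧ ∑ i ∈ S, c i = 1,
          (#{σ | IsFirstHit c σ S} : ℝ) / n.factorial := by
        refine sum_le_sum fun S hS => ?_
        obtain ⟨hne, hc⟩ := (mem_filter.1 hS).2
        have hpos : (0 : ℝ) < #S * n.choose #S := by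
          have := Nat.choose_pos (card_finset_fin_le S)
          have := card_pos.2 hne
          positivity
        rw [div_le_div_iff₀ hpos hfac, one_mul, mul_comm]
        exact_mod_cast factorial_le_card_mul_choose_mul_card_isFirstHit hne hc
    _ ≤ #{σ : Perm (Fin n) | c (σ 0) ≤ 1} / n.factorial := by
        rw [← sum_div]
        gcongr
        exact_mod_cast sum_card_isFirstHit_le c
    _ = 1 - #{i | 1 < c i} / n := by
        field_simp
        linarith [natCast_mul_card_apply_zero_le_one c]

end

open scoped Classical in
theorem few_large_coefficients_general (n r : ℕ) (hn : 1 ≤ n) (c : Fin n → ℝ)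
    (hw : 1 - (r : ℝ) / n < hyperplaneWeight c) :
    (Finset.univ.filter (fun i : Fin n => 1 < c i)).card ≤ r - 1 := by
  have : NeZero n := ⟨by omega⟩
  have hlt : (#{i | 1 < c i} : ℝ) / n < r / n := by linarith [hyperplaneWeight_le c]
  have : #{i | 1 < c i} < r := by
    exact_mod_cast (div_lt_div_iff_of_pos_right (by positivity)).1 hlt
  omega

open scoped Classical in
theorem few_large_coefficients (n r : ℕ) (hn : 1 ≤ n) (hr : 1 ≤ r) (c : Fin n → ℝ)
    (hw : 1 - (r : ℝ) / n < hyperplaneWeight c) :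
    (Finset.univ.filter (fun i : Fin n => 1 < c i)).card ≤ r - 1 :=
  few_large_coefficients_general n r hn c hw
end

section
/- Let n ≥ 1, r ≥ 1, and let c ∈ ℝ^n define the hyperplane h = {x ∈ ℝ^n : ∑_{i=1}^n c_i x_i = 1} with weight w(h) > 1 − r/n. Then the number of indices i with c_i ∉ ℤ is at most 2r² − 1. -/
/-! Order the coordinates and look at the first nonempty prefix on which `c` sums to `1`. A set
`x` with `∑ i ∈ x, c i = 1` is that prefix for every ordering that starts with an arrangement of
`x` having no proper prefix summing to `1`, followed by any arrangement of `xᶜ`. By the cycle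
lemma every cyclic arrangement of `x` has such a rotation, and at least two if some `c i`,
`i ∈ x`, is not an integer. Weighting `x` by `2` if all its coefficients are integers and by `1`
otherwise, and charging each ordering to its first coordinate, gives
`2 n! w(h) ≤ (2n - f) (n - 1)!` with `f` the number of non-integral `c i`, i.e.
`w(h) ≤ 1 - f / (2n)`. So `w(h) > 1 - r / n` forces `f < 2r`. -/

open scoped Classical
open Finset

def NoProperPrefixSumOne (v : List ℝ) : Prop :=
  ∀ k, 0 < k → k < v.length → (v.take k).sum ≠ 1

theorem Finset.exists_least_max_image {ι β : Type*} [LinearOrder ι] [LinearOrder β]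
    (s : Finset ι) (f : ι → β) (hs : s.Nonempty) :
    ∃ p ∈ s, (∀ q ∈ s, f q ≤ f p) ∧ ∀ q ∈ s, q < p → f q < f p := by
  obtain ⟨p, hp, hmax⟩ := s.exists_max_image (fun q => toLex (f q, OrderDual.toDual q)) hs
  refine ⟨p, hp, fun q hq => ?_, fun q hq hqp => ?_⟩ <;>
    rcases Prod.Lex.le_iff.1 (hmax q hq) with h | ⟨h, h'⟩
  · exact h.le
  · exact h.le
  · exact h
  · exact absurd (OrderDual.toDual_le_toDual.1 h') (not_le.2 hqp)

theorem List.sum_take_rotate {M : Type*} [AddCommGroup M] (v : List M) {p k : ℕ}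
    (hp : p ≤ v.length) (hk : k ≤ v.length) :
    ((v.rotate p).take k).sum = ((v ++ v).take (p + k)).sum - ((v ++ v).take p).sum := by
  have : (v.rotate p).take k = ((v ++ v).drop p).take k := by
    rw [rotate_eq_drop_append_take hp, drop_append_of_le_length hp, take_append, take_append,
      take_take, length_drop, min_eq_left (by omega)]
  rw [this, take_add, sum_append, add_sub_cancel_left]

section CycleLemma

variable {v : List ℝ}

theorem exists_rotate_noProperPrefixSumOne (hv : v.sum = 1) {q₀ : ℕ} (hq₀ : q₀ < v.length) :
    ∃ p < v.length, NoProperPrefixSumOne (v.rotate p) ∧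
      ∃ z : ℤ, (v.take p).sum = (v.take q₀).sum + z := by
  set S : ℕ → ℝ := fun q => (v.take q).sum
  set cls := (range v.length).filter fun q => ∃ z : ℤ, S q = S q₀ + z
  have hq₀cls : q₀ ∈ cls := mem_filter.2 ⟨mem_range.2 hq₀, 0, by simp⟩
  -- start at the first maximum of `S` among the partial sums congruent to `S q₀` modulo `ℤ`
  obtain ⟨p, hp, hmax, hfirst⟩ := cls.exists_least_max_image S ⟨q₀, hq₀cls⟩
  obtain ⟨hplt, z, hz⟩ := mem_filter.1 hp
  rw [mem_range] at hplt
  refine ⟨p, hplt, fun k hk hkm hsum => ?_, z, hz⟩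
  rw [List.length_rotate] at hkm
  rw [List.sum_take_rotate v hplt.le hkm.le, List.take_append_of_le_length hplt.le] at hsum
  rcases lt_or_ge (p + k) v.length with h | h
  · rw [List.take_append_of_le_length h.le] at hsum
    have : p + k ∈ cls := mem_filter.2 ⟨mem_range.2 h, z + 1, by push_cast; linarith⟩
    linarith [hmax _ this]
  · obtain ⟨j, hj⟩ : ∃ j, p + k = v.length + j := ⟨p + k - v.length, by omega⟩
    rw [hj, List.take_length_add_append, List.sum_append, hv] at hsum
    have : j ∈ cls := mem_filter.2 ⟨mem_range.2 (by omega), z, by linarith⟩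
    linarith [hfirst j this (by omega)]

theorem exists_take_sum_not_int (hv : v.sum = 1) (hfrac : ∃ a ∈ v, ¬∃ m : ℤ, (m : ℝ) = a) :
    ∃ q < v.length, ¬∃ m : ℤ, (m : ℝ) = (v.take q).sum := by
  by_contra! hint
  obtain ⟨a, ha, hfrac⟩ := hfrac
  obtain ⟨i, hi, rfl⟩ := List.getElem_of_mem ha
  obtain ⟨m, hm⟩ := hint i hi
  obtain ⟨m', hm'⟩ : ∃ m' : ℤ, (m' : ℝ) = (v.take (i + 1)).sum := by
    rcases (show i + 1 ≤ v.length from hi).lt_or_eq with h | h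
    · exact hint _ h
    · exact ⟨1, by rw [h, List.take_length, hv, Int.cast_one]⟩
  rw [List.sum_take_succ _ _ hi, ← hm] at hm'
  exact hfrac ⟨m' - m, by push_cast; linarith⟩

theorem card_rotate_noProperPrefixSumOne_pos (hv : v.sum = 1) (hne : v ≠ []) :
    0 < #{p ∈ range v.length | NoProperPrefixSumOne (v.rotate p)} := by
  obtain ⟨p, hp, hgood, -⟩ :=
    exists_rotate_noProperPrefixSumOne hv (q₀ := 0) (List.length_pos_iff.2 hne)
  exact card_pos.2 ⟨p, by simp [hp, hgood]⟩

theorem two_le_card_rotate_noProperPrefixSumOne (hv : v.sum = 1)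
    (hfrac : ∃ a ∈ v, ¬∃ m : ℤ, (m : ℝ) = a) :
    2 ≤ #{p ∈ range v.length | NoProperPrefixSumOne (v.rotate p)} := by
  obtain ⟨q, hq, hqfrac⟩ := exists_take_sum_not_int hv hfrac
  obtain ⟨p₁, hp₁, hgood₁, z₁, hz₁⟩ := exists_rotate_noProperPrefixSumOne hv (q₀ := 0) (by omega)
  obtain ⟨p₂, hp₂, hgood₂, z₂, hz₂⟩ := exists_rotate_noProperPrefixSumOne hv hq
  have hne : p₁ ≠ p₂ := by
    rintro rfl
    exact hqfrac ⟨z₁ - z₂, by push_cast [List.take_zero, List.sum_nil] at hz₁ ⊢; linarith⟩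
  exact one_lt_card.2 ⟨p₁, by simp [hp₁, hgood₁], p₂, by simp [hp₂, hgood₂], hne⟩

theorem NoProperPrefixSumOne.eq_of_prefix {w : List ℝ} (hw : NoProperPrefixSumOne w)
    (h : v <+: w) (hv : v ≠ []) (hsum : v.sum = 1) : v = w := by
  by_contra hne
  refine hw v.length (List.length_pos_iff.2 hv)
    (h.length_le.lt_of_ne fun heq => hne (h.eq_of_length heq)) ?_
  rwa [← List.prefix_iff_eq_take.1 h]

end CycleLemma

theorem card_mul_card_filter_eq_sum_card_rotate {α : Type*} {L : Finset (List α)} {m : ℕ}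
    (hlen : ∀ l ∈ L, l.length = m) (hrot : ∀ l ∈ L, ∀ k, l.rotate k ∈ L) (P : List α → Prop) :
    m * #{l ∈ L | P l} = ∑ l ∈ L, #{k ∈ range m | P (l.rotate k)} := by
  have hinv : ∀ l ∈ L, ∀ k j, k + j = m → (l.rotate k).rotate j = l := fun l hl k j h => by
    rw [List.rotate_rotate, h, ← hlen l hl, List.rotate_length]
  have hk : ∀ k ∈ range m, #{l ∈ L | P (l.rotate k)} = #{l ∈ L | P l} := fun k hk => by
    have hkm : k + (m - k) = m := Nat.add_sub_cancel' (mem_range.1 hk).le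
    have hmk : m - k + k = m := Nat.sub_add_cancel (mem_range.1 hk).le
    refine card_nbij' (·.rotate k) (·.rotate (m - k)) (fun l hl => ?_) (fun l hl => ?_)
      (fun l hl => hinv l (mem_filter.1 hl).1 _ _ hkm)
      (fun l hl => hinv l (mem_filter.1 hl).1 _ _ hmk)
    · obtain ⟨hlL, hP⟩ := mem_filter.1 hl
      exact mem_filter.2 ⟨hrot l hlL k, hP⟩
    · obtain ⟨hlL, hP⟩ := mem_filter.1 hl
      exact mem_filter.2 ⟨hrot l hlL _, by rwa [hinv l hlL _ _ hmk]⟩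
  calc m * #{l ∈ L | P l} = ∑ k ∈ range m, #{l ∈ L | P (l.rotate k)} := by
        rw [sum_congr rfl hk, sum_const, card_range, smul_eq_mul]
    _ = ∑ l ∈ L, #{k ∈ range m | P (l.rotate k)} := by
        simp only [card_filter]
        exact sum_comm

section Arrangements

variable {α : Type*}

def arrangements (s : Finset α) : Finset (List α) :=
  ⟨s.val.lists, Multiset.lists_nodup_finset s⟩

variable {s t : Finset α} {l l₁ l₂ : List α}

theorem mem_arrangements : l ∈ arrangements s ↔ (l : Multiset α) = s.val := by
  rw [arrangements, Finset.mem_mk, Multiset.mem_lists_iff, eq_comm]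
  rfl

theorem card_arrangements (s : Finset α) : #(arrangements s) = s.card.factorial := by
  rw [arrangements, Finset.card_mk, ← Finset.coe_toList s, Multiset.lists_coe,
    Multiset.coe_card, List.length_permutations, Finset.length_toList]

theorem length_of_mem_arrangements (hl : l ∈ arrangements s) : l.length = s.card := by
  rw [← Multiset.coe_card, mem_arrangements.1 hl, Finset.card_val]

theorem ne_nil_of_mem_arrangements (hs : s.Nonempty) (hl : l ∈ arrangements s) : l ≠ [] := by
  rw [← List.length_pos_iff, length_of_mem_arrangements hl]
  exact hs.card_pos

theorem mem_of_mem_arrangements (hl : l ∈ arrangements s) {a : α} : a ∈ l ↔ a ∈ s := by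
  rw [← Multiset.mem_coe, mem_arrangements.1 hl, Finset.mem_val]

theorem sum_map_of_mem_arrangements {M : Type*} [AddCommMonoid M] (f : α → M)
    (hl : l ∈ arrangements s) : (l.map f).sum = ∑ i ∈ s, f i := by
  rw [← Multiset.sum_coe, ← Multiset.map_coe, mem_arrangements.1 hl, Finset.sum_eq_multiset_sum]

theorem rotate_mem_arrangements (hl : l ∈ arrangements s) (k : ℕ) :
    l.rotate k ∈ arrangements s :=
  mem_arrangements.2 ((Multiset.coe_eq_coe.2 (l.rotate_perm k)).trans (mem_arrangements.1 hl))

theorem append_mem_arrangements (h : Disjoint s t) (hl₁ : l₁ ∈ arrangements s)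
    (hl₂ : l₂ ∈ arrangements t) : l₁ ++ l₂ ∈ arrangements (s ∪ t) := by
  rw [← Finset.disjUnion_eq_union s t h, mem_arrangements, ← Multiset.coe_add,
    mem_arrangements.1 hl₁, mem_arrangements.1 hl₂]
  rfl

theorem head?_append_toFinset_subset (hs : s.Nonempty) (hl₁ : l₁ ∈ arrangements s) :
    (l₁ ++ l₂).head?.toFinset ⊆ s := by
  intro i hi
  rw [Option.mem_toFinset, List.head?_append_of_ne_nil _ (ne_nil_of_mem_arrangements hs hl₁)] at hi
  exact (mem_of_mem_arrangements hl₁).1 (List.mem_of_mem_head? hi)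

theorem sum_arrangements_eq_sum_cons {M : Type*} [AddCommMonoid M] (hs : s.Nonempty)
    (F : List α → M) :
    ∑ l ∈ arrangements s, F l = ∑ i ∈ s, ∑ l ∈ arrangements (s.erase i), F (i :: l) := by
  rw [← Finset.sum_sigma s (fun i => arrangements (s.erase i)) (fun q => F (q.1 :: q.2))]
  symm
  refine Finset.sum_bij (fun q _ => q.1 :: q.2) (fun ⟨i, l⟩ h => ?_)
    (fun ⟨i, l⟩ _ ⟨j, l'⟩ _ h => ?_) (fun l hl => ?_) (fun _ _ => rfl)
  · obtain ⟨hi, hl⟩ := Finset.mem_sigma.1 h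
    rw [mem_arrangements, ← Multiset.cons_coe, mem_arrangements.1 hl, Finset.erase_val,
      Multiset.cons_erase hi]
  · obtain ⟨rfl, rfl⟩ := List.cons.inj h
    rfl
  · obtain ⟨i, l', rfl⟩ := List.exists_cons_of_ne_nil (ne_nil_of_mem_arrangements hs hl)
    have hi : i ∈ s := (mem_of_mem_arrangements hl).1 List.mem_cons_self
    refine ⟨⟨i, l'⟩, Finset.mem_sigma.2 ⟨hi, mem_arrangements.2 ?_⟩, rfl⟩
    rw [Finset.erase_val, ← mem_arrangements.1 hl, ← Multiset.cons_coe, Multiset.erase_cons_head]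

theorem mul_factorial_le_card_filter_arrangements (hs : s.Nonempty) (P : List α → Prop) {j : ℕ}
    (h : ∀ l ∈ arrangements s, j ≤ #{k ∈ range s.card | P (l.rotate k)}) :
    j * (s.card - 1).factorial ≤ #{l ∈ arrangements s | P l} := by
  refine Nat.le_of_mul_le_mul_left ?_ hs.card_pos
  calc s.card * (j * (s.card - 1).factorial) = ∑ _l ∈ arrangements s, j := by
        rw [sum_const, card_arrangements, smul_eq_mul, ← Nat.mul_factorial_pred hs.card_pos.ne']
        ring
    _ ≤ ∑ l ∈ arrangements s, #{k ∈ range s.card | P (l.rotate k)} := sum_le_sum h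
    _ = s.card * #{l ∈ arrangements s | P l} :=
        (card_mul_card_filter_eq_sum_card_rotate (fun _ => length_of_mem_arrangements)
          (fun _ => rotate_mem_arrangements) P).symm

end Arrangements

noncomputable section HittingSets

variable {α : Type*} (c : α → ℝ)

def primitiveArrangements (x : Finset α) : Finset (List α) :=
  {l ∈ arrangements x | NoProperPrefixSumOne (l.map c)}

def integralWeight (x : Finset α) : ℕ := if ∀ i ∈ x, ∃ m : ℤ, (m : ℝ) = c i then 2 else 1

variable {c}

theorem integralWeight_anti {x y : Finset α} (h : x ⊆ y) :
    integralWeight c y ≤ integralWeight c x := by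
  unfold integralWeight
  split_ifs with hy hx
  all_goals first | omega | exact absurd (fun i hi => hy i (h hi)) hx

theorem eq_of_prefix_of_mem_primitiveArrangements {x x' : Finset α} {a b : List α}
    (hne : x.Nonempty) (hsum : ∑ i ∈ x, c i = 1) (ha : a ∈ primitiveArrangements c x)
    (hb : b ∈ primitiveArrangements c x') (hab : a <+: b) : a = b := by
  have ha' := (mem_filter.1 ha).1
  have hmap := (mem_filter.1 hb).2.eq_of_prefix (hab.map c)
    (by simpa using ne_nil_of_mem_arrangements hne ha')
    (by rw [sum_map_of_mem_arrangements c ha', hsum])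
  exact hab.eq_of_length (by simpa using congrArg List.length hmap)

variable (c) [Fintype α]

def hittingSets : Finset (Finset α) := {x | x.Nonempty ∧ ∑ i ∈ x, c i = 1}

variable {c}

theorem two_mul_factorial_le_integralWeight_mul_card {x : Finset α} (hx : x ∈ hittingSets c) :
    2 * (x.card - 1).factorial ≤ integralWeight c x * #(primitiveArrangements c x) := by
  obtain ⟨hne, hsum⟩ := (mem_filter.1 hx).2
  have hv : ∀ l ∈ arrangements x, (l.map c).sum = 1 := fun l hl => by
    rw [sum_map_of_mem_arrangements c hl, hsum]
  have hprim : ∀ j, (∀ l ∈ arrangements x,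
      j ≤ #{p ∈ range (l.map c).length | NoProperPrefixSumOne ((l.map c).rotate p)}) →
      j * (x.card - 1).factorial ≤ #(primitiveArrangements c x) := fun j h =>
    mul_factorial_le_card_filter_arrangements hne _ fun l hl => by
      simpa only [List.map_rotate, List.length_map, length_of_mem_arrangements hl] using h l hl
  unfold integralWeight
  split_ifs with hint
  · have := hprim 1 fun l hl => card_rotate_noProperPrefixSumOne_pos (hv l hl)
      (by simpa using ne_nil_of_mem_arrangements hne hl)
    rw [one_mul] at this
    exact Nat.mul_le_mul_left 2 this
  · push Not at hint
    obtain ⟨i, hi, hfrac⟩ := hint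
    rw [one_mul]
    exact hprim 2 fun l hl => two_le_card_rotate_noProperPrefixSumOne (hv l hl)
      ⟨c i, List.mem_map_of_mem ((mem_of_mem_arrangements hl).2 hi), fun ⟨m, hm⟩ => hfrac m hm⟩

theorem injOn_append_primitiveArrangements :
    Set.InjOn (fun q : (_ : Finset α) × List α × List α => q.2.1 ++ q.2.2)
      ((hittingSets c).sigma fun x => primitiveArrangements c x ×ˢ arrangements xᶜ) := by
  rintro ⟨x, l₁, l₂⟩ hq ⟨x', l₁', l₂'⟩ hq' h
  simp only [coe_sigma, Set.mem_sigma_iff, mem_coe, mem_product] at hq hq' h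
  obtain ⟨hx, hl₁, -⟩ := hq
  obtain ⟨hx', hl₁', -⟩ := hq'
  obtain ⟨hne, hsum⟩ := (mem_filter.1 hx).2
  obtain ⟨hne', hsum'⟩ := (mem_filter.1 hx').2
  obtain rfl : l₁ = l₁' := by
    rcases List.prefix_or_prefix_of_prefix (List.prefix_append l₁ l₂)
      (h ▸ List.prefix_append l₁' l₂') with hp | hp
    · exact eq_of_prefix_of_mem_primitiveArrangements hne hsum hl₁ hl₁' hp
    · exact (eq_of_prefix_of_mem_primitiveArrangements hne' hsum' hl₁' hl₁ hp).symm
  obtain rfl := List.append_cancel_left h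
  obtain rfl : x = x' := Finset.val_inj.1 ((mem_arrangements.1 (mem_filter.1 hl₁).1).symm.trans
    (mem_arrangements.1 (mem_filter.1 hl₁').1))
  rfl

theorem sum_integralWeight_mul_card_le :
    ∑ x ∈ hittingSets c, integralWeight c x * #(primitiveArrangements c x) * #(arrangements xᶜ)
      ≤ ∑ l ∈ arrangements univ, integralWeight c l.head?.toFinset := by
  set Q := (hittingSets c).sigma fun x => primitiveArrangements c x ×ˢ arrangements xᶜ
  calc _ = ∑ x ∈ hittingSets c, ∑ _p ∈ primitiveArrangements c x ×ˢ arrangements xᶜ,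
        integralWeight c x := by
        simp only [sum_const, card_product, smul_eq_mul, mul_comm, mul_left_comm]
    _ ≤ ∑ x ∈ hittingSets c, ∑ p ∈ primitiveArrangements c x ×ˢ arrangements xᶜ,
        integralWeight c (p.1 ++ p.2).head?.toFinset := by
        refine sum_le_sum fun x hx => sum_le_sum fun p hp => integralWeight_anti ?_
        exact head?_append_toFinset_subset (mem_filter.1 hx).2.1
          (mem_filter.1 (mem_product.1 hp).1).1
    _ = ∑ l ∈ Q.image (fun q => q.2.1 ++ q.2.2), integralWeight c l.head?.toFinset := by
        rw [sum_image injOn_append_primitiveArrangements, sum_sigma]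
    _ ≤ _ := by
        refine sum_le_sum_of_subset (image_subset_iff.2 fun q hq => ?_)
        obtain ⟨hl₁, hl₂⟩ := mem_product.1 (mem_sigma.1 hq).2
        rw [← union_compl q.1]
        exact append_mem_arrangements disjoint_compl_right (mem_filter.1 hl₁).1 hl₂

variable (c)

theorem two_mul_sum_hittingSets_factorial_le [Nonempty α] :
    2 * ∑ x ∈ hittingSets c, (x.card - 1).factorial * (Fintype.card α - x.card).factorial
      ≤ (∑ i, integralWeight c {i}) * (Fintype.card α - 1).factorial := by
  calc 2 * ∑ x ∈ hittingSets c, (x.card - 1).factorial * (Fintype.card α - x.card).factorial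
      = ∑ x ∈ hittingSets c, 2 * (x.card - 1).factorial * #(arrangements xᶜ) := by
        simp only [mul_sum, card_arrangements, card_compl, mul_assoc]
    _ ≤ ∑ x ∈ hittingSets c,
        integralWeight c x * #(primitiveArrangements c x) * #(arrangements xᶜ) :=
        sum_le_sum fun x hx =>
          Nat.mul_le_mul_right _ (two_mul_factorial_le_integralWeight_mul_card hx)
    _ ≤ ∑ l ∈ arrangements univ, integralWeight c l.head?.toFinset :=
        sum_integralWeight_mul_card_le
    _ = (∑ i, integralWeight c {i}) * (Fintype.card α - 1).factorial := by
        rw [sum_arrangements_eq_sum_cons univ_nonempty, sum_mul]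
        simp [card_arrangements, mul_comm]

theorem sum_integralWeight_singleton_add_card :
    ∑ i, integralWeight c {i} + #{i | ¬∃ m : ℤ, (m : ℝ) = c i} = 2 * Fintype.card α := by
  rw [card_filter, ← sum_add_distrib, ← card_univ, mul_comm, ← smul_eq_mul, ← sum_const]
  refine sum_congr rfl fun i _ => ?_
  unfold integralWeight
  split_ifs <;> simp_all

end HittingSets

theorem one_div_mul_choose_eq {n t : ℕ} (ht : 0 < t) (htn : t ≤ n) :
    (1 : ℝ) / (t * n.choose t) = (t - 1).factorial * (n - t).factorial / n.factorial := by
  have hchoose : (0 : ℝ) < n.choose t := by exact_mod_cast Nat.choose_pos htn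
  rw [div_eq_div_iff (by positivity) (by positivity), one_mul,
    ← Nat.choose_mul_factorial_mul_factorial htn, ← Nat.mul_factorial_pred ht.ne']
  push_cast
  ring

theorem two_mul_hyperplaneWeight_add_card_le {n : ℕ} (hn : 0 < n) (c : Fin n → ℝ) :
    2 * n * hyperplaneWeight c + #{i | ¬∃ m : ℤ, (m : ℝ) = c i} ≤ 2 * n := by
  have : Nonempty (Fin n) := ⟨⟨0, hn⟩⟩
  have hW : hyperplaneWeight c * n.factorial =
      ∑ x ∈ hittingSets c, ((x.card - 1).factorial * (n - x.card).factorial : ℝ) := by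
    rw [hyperplaneWeight, ← sum_filter, sum_mul]
    refine sum_congr rfl fun x hx => ?_
    rw [one_div_mul_choose_eq (mem_filter.1 hx).2.1.card_pos (by simpa using card_le_univ x)]
    field_simp
  have hcount := two_mul_sum_hittingSets_factorial_le c
  have hsum := sum_integralWeight_singleton_add_card c
  rw [Fintype.card_fin] at hcount hsum
  replace hcount := (Nat.cast_le (α := ℝ)).2 hcount
  replace hsum := congrArg (Nat.cast (R := ℝ)) hsum
  push_cast at hcount hsum
  rw [← hW, ← Nat.mul_factorial_pred hn.ne', Nat.cast_mul] at hcount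
  have hfac : (0 : ℝ) < (n - 1).factorial := by exact_mod_cast Nat.factorial_pos _
  nlinarith

open scoped Classical in
theorem few_fractional_coefficients_general (n r : ℕ) (c : Fin n → ℝ)
    (hw : 1 - (r : ℝ) / n < hyperplaneWeight c) :
    (Finset.univ.filter (fun i : Fin n => ¬ ∃ m : ℤ, (m : ℝ) = c i)).card ≤ 2 * r ^ 2 - 1 := by
  rcases n.eq_zero_or_pos with rfl | hn
  · simp
  have hbound := two_mul_hyperplaneWeight_add_card_le hn c
  have hnpos : (0 : ℝ) < n := by exact_mod_cast hn
  have hw' : (n : ℝ) - r < n * hyperplaneWeight c := by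
    have := mul_lt_mul_of_pos_left hw hnpos
    rwa [mul_sub, mul_one, mul_div_cancel₀ _ hnpos.ne'] at this
  have hfrac : #{i | ¬∃ m : ℤ, (m : ℝ) = c i} < 2 * r := by
    exact_mod_cast (by linarith : (#{i | ¬∃ m : ℤ, (m : ℝ) = c i} : ℝ) < 2 * r)
  have := Nat.le_self_pow two_ne_zero r
  omega

open scoped Classical in
theorem few_fractional_coefficients (n r : ℕ) (hn : 1 ≤ n) (hr : 1 ≤ r) (c : Fin n → ℝ)
    (hw : 1 - (r : ℝ) / n < hyperplaneWeight c) :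
    (Finset.univ.filter (fun i : Fin n => ¬ ∃ m : ℤ, (m : ℝ) = c i)).card ≤ 2 * r ^ 2 - 1 :=
  few_fractional_coefficients_general n r c hw
end

section
/- Let n ≥ 1 and 1 ≤ r ≤ n, and let c ∈ ℝ^n be the vector with c_1 = ⋯ = c_{r−1} = 2 and c_r = ⋯ = c_n = 1. Then the hyperplane h = {x ∈ ℝ^n : ∑_{i=1}^n c_i x_i = 1} has weight w(h) = 1 − (r−1)/n. -/
theorem weight_two_one_hyperplane (n r : ℕ) (hr : 1 ≤ r) (hrn : r ≤ n) :
    hyperplaneWeight (fun i : Fin n => if (i : ℕ) < r - 1 then (2 : ℝ) else 1) =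
      1 - ((r : ℝ) - 1) / n := by
  classical
  set c : Fin n → ℝ := fun i : Fin n => if (i : ℕ) < r - 1 then (2 : ℝ) else 1 with hcdef
  have hc1 : ∀ i, (1:ℝ) ≤ c i := by
    intro i; simp only [hcdef]; split <;> norm_num
  set F : Finset (Fin n) := Finset.univ.filter fun i : Fin n => r - 1 ≤ (i:ℕ) with hF
  have key : ∀ S : Finset (Fin n), ((S.Nonempty ∧ ∑ i ∈ S, c i = 1) ↔
      ∃ i ∈ F, S = {i}) := by
    intro S
    constructor
    · rintro ⟨hne, hsum⟩
      have hge : (S.card : ℝ) ≤ ∑ i ∈ S, c i := by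
        calc (S.card : ℝ) = ∑ _i ∈ S, (1:ℝ) := by simp
          _ ≤ ∑ i ∈ S, c i := Finset.sum_le_sum fun i _ => hc1 i
      rw [hsum] at hge
      have hcard : S.card ≤ 1 := by exact_mod_cast hge
      have hcard1 : S.card = 1 := le_antisymm hcard (Finset.one_le_card.mpr hne)
      obtain ⟨i, hi⟩ := Finset.card_eq_one.mp hcard1
      refine ⟨i, ?_, hi⟩
      subst hi
      simp only [Finset.sum_singleton, hcdef] at hsum
      simp only [hF, Finset.mem_filter, Finset.mem_univ, true_and]
      by_contra h
      push_neg at h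
      rw [if_pos h] at hsum
      norm_num at hsum
    · rintro ⟨i, hi, rfl⟩
      simp only [hF, Finset.mem_filter, Finset.mem_univ, true_and] at hi
      refine ⟨Finset.singleton_nonempty i, ?_⟩
      simp [hcdef, Nat.not_lt.mpr hi]
  have hterm : ∀ S : Finset (Fin n),
      (if S.Nonempty ∧ ∑ i ∈ S, c i = 1 then
        (1:ℝ) / (S.card * (n.choose S.card)) else 0)
      = ∑ i ∈ F, if S = {i} then (1:ℝ) / n else 0 := by
    intro S
    by_cases h : S.Nonempty ∧ ∑ i ∈ S, c i = 1
    · obtain ⟨i₀, hi₀, rfl⟩ := (key S).mp h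
      rw [if_pos h]
      rw [Finset.sum_eq_single i₀]
      · simp
      · intro j _ hji
        rw [if_neg]
        intro hSj
        exact hji (Finset.singleton_injective hSj).symm
      · intro hi; exact absurd hi₀ hi
    · rw [if_neg h]
      symm
      apply Finset.sum_eq_zero
      intro i hi
      rw [if_neg]
      intro hSi
      exact h ((key S).mpr ⟨i, hi, hSi⟩)
  have hFcard : F.card = n - (r - 1) := by
    have h : Finset.map Fin.valEmbedding F = Finset.Ico (r-1) n := by
      ext m
      simp only [hF, Finset.mem_map, Finset.mem_filter, Finset.mem_univ, true_and,
        Fin.valEmbedding_apply, Finset.mem_Ico]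
      constructor
      · rintro ⟨i, hi, rfl⟩; exact ⟨hi, i.isLt⟩
      · rintro ⟨h1, h2⟩; exact ⟨⟨m, h2⟩, h1, rfl⟩
    have := congrArg Finset.card h
    simpa using this
  have hsum : hyperplaneWeight c = ∑ S : Finset (Fin n), ∑ i ∈ F,
      (if S = {i} then (1:ℝ) / n else 0) := by
    unfold hyperplaneWeight
    exact Finset.sum_congr rfl fun S _ => hterm S
  rw [hsum, Finset.sum_comm]
  have : ∀ i ∈ F, (∑ S : Finset (Fin n), if S = {i} then (1:ℝ) / n else 0) = 1 / n := by
    intro i _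
    rw [Finset.sum_ite_eq' Finset.univ ({i} : Finset (Fin n)) (fun _ => (1:ℝ)/n)]
    simp
  rw [Finset.sum_congr rfl this, Finset.sum_const, hFcard, nsmul_eq_mul]
  have hn : (0:ℝ) < n := by exact_mod_cast Nat.pos_of_ne_zero (by omega)
  have hcast : ((n - (r - 1) : ℕ) : ℝ) = (n : ℝ) - ((r:ℝ) - 1) := by
    have h1 : r - 1 ≤ n := le_trans (Nat.sub_le r 1) hrn
    push_cast [Nat.cast_sub h1, Nat.cast_sub hr]
    ring
  rw [hcast]
  field_simp
end

section
/- Let n ≥ 1 and let c ∈ ℝ^n with ∑_{i=1}^n c_i < 1. Then for every permutation π of {1, …, n} there exists a cyclic rotation π' of π (i.e., π'(ℓ) = π(((ℓ − 1 + r) mod n) + 1) for some 0 ≤ r < n) that is bad with respect to c. -/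
/-- The sum of the first `t` coefficients along the permutation `π`,
i.e. `∑_{j=1}^t c_{π(j)}` (with 0-indexed positions). -/
def partialSum {n : ℕ} (c : Fin n → ℝ) (π : Equiv.Perm (Fin n)) (t : ℕ) : ℝ :=
  ∑ j ∈ Finset.univ.filter (fun j : Fin n => (j : ℕ) < t), c (π j)

/-- A permutation `π` is bad with respect to `c` if it yields no set: there is no
index `t ∈ [n]` such that the `t`-th partial sum equals `1` while all earlier
partial sums are strictly less than `1`. -/
def IsBad {n : ℕ} (c : Fin n → ℝ) (π : Equiv.Perm (Fin n)) : Prop :=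
  ¬ ∃ t : ℕ, 1 ≤ t ∧ t ≤ n ∧ partialSum c π t = 1 ∧
      ∀ l : ℕ, 1 ≤ l → l < t → partialSum c π l < 1

theorem exists_bad_rotation (n : ℕ) (hn : 1 ≤ n) (c : Fin n → ℝ)
    (hc : ∑ i, c i < 1) (π : Equiv.Perm (Fin n)) :
    ∃ r : ℕ, r < n ∧ IsBad c (π * (finRotate n) ^ r) := by
  obtain ⟨m, rfl⟩ : ∃ m, n = m + 1 := ⟨n - 1, by omega⟩
  have hpos : 0 < m + 1 := Nat.succ_pos m
  set D : ℕ → ℝ := fun k => c (π ⟨k % (m + 1), Nat.mod_lt _ hpos⟩) with hD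
  set T : ℕ → ℝ := fun t => ∑ k ∈ Finset.range t, D k with hT
  have hDper : ∀ k, D ((m + 1) + k) = D k := by
    intro k
    simp only [hD]
    apply congrArg
    apply congrArg
    apply Fin.ext
    simp [Nat.add_mod_left]
  have hpow : ∀ (r : ℕ) (j : Fin (m + 1)),
      (((finRotate (m + 1)) ^ r) j).val = (j.val + r) % (m + 1) := by
    intro r
    induction r with
    | zero => intro j; simp [Nat.mod_eq_of_lt j.isLt]
    | succ r ih =>
      intro j
      rw [pow_succ', Equiv.Perm.mul_apply, finRotate_succ_apply, Fin.val_add, ih j,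
        Fin.val_one', Nat.mod_add_mod, Nat.add_mod_mod, Nat.add_assoc]
  have hps : ∀ (r t : ℕ), t ≤ m + 1 →
      partialSum c (π * (finRotate (m + 1)) ^ r) t = ∑ i ∈ Finset.range t, D (r + i) := by
    intro r t ht
    unfold partialSum
    have h1 : ∀ j : Fin (m + 1),
        c ((π * (finRotate (m + 1)) ^ r) j) = D (r + j.val) := by
      intro j
      simp only [Equiv.Perm.mul_apply, hD]
      congr 1
      apply congrArg
      apply Fin.ext
      rw [hpow]
      simp [Nat.add_comm]
    calc ∑ j ∈ Finset.univ.filter (fun j : Fin (m + 1) => (j : ℕ) < t),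
            c ((π * (finRotate (m + 1)) ^ r) j)
        = ∑ j ∈ Finset.univ.filter (fun j : Fin (m + 1) => (j : ℕ) < t), D (r + j.val) :=
          Finset.sum_congr rfl fun j _ => h1 j
      _ = ∑ j : Fin (m + 1), if (j : ℕ) < t then D (r + j.val) else 0 := by
          rw [Finset.sum_filter]
      _ = ∑ i ∈ Finset.range (m + 1), if i < t then D (r + i) else 0 :=
          Fin.sum_univ_eq_sum_range (fun i => if i < t then D (r + i) else 0) (m + 1)
      _ = ∑ i ∈ (Finset.range (m + 1)).filter (fun i => i < t), D (r + i) :=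
          (Finset.sum_filter _ _).symm
      _ = ∑ i ∈ Finset.range t, D (r + i) := by
          congr 1
          ext x
          simp only [Finset.mem_filter, Finset.mem_range]
          omega
  have hshift : ∀ r t : ℕ, ∑ i ∈ Finset.range t, D (r + i) = T (r + t) - T r := by
    intro r t
    rw [hT]
    simp only
    rw [Finset.sum_range_add]
    ring
  have hTadd : ∀ s : ℕ, T ((m + 1) + s) = T (m + 1) + T s := by
    intro s
    simp only [hT]
    rw [Finset.sum_range_add]
    congr 1
    exact Finset.sum_congr rfl fun i _ => hDper i
  have hTn : T (m + 1) = ∑ i, c i := by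
    simp only [hT]
    rw [← Fin.sum_univ_eq_sum_range (fun i => D i) (m + 1)]
    have : ∀ j : Fin (m + 1), D j.val = c (π j) := by
      intro j
      simp only [hD]
      congr 1
      apply congrArg
      apply Fin.ext
      simp [Nat.mod_eq_of_lt j.isLt]
    rw [Finset.sum_congr rfl fun j _ => this j]
    exact Equiv.sum_comp π c
  have hT0 : T 0 = 0 := by simp [hT]
  obtain ⟨r, hrmem, hrmax⟩ :=
    Finset.exists_max_image (Finset.range (m + 1)) T ⟨0, Finset.mem_range.mpr hpos⟩
  have hr : r < m + 1 := Finset.mem_range.mp hrmem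
  refine ⟨r, hr, ?_⟩
  rintro ⟨t, ht1, htn, heq, -⟩
  rw [hps r t htn, hshift r t] at heq
  have hTr0 : 0 ≤ T r := hT0 ▸ hrmax 0 (Finset.mem_range.mpr hpos)
  have hlt : T (r + t) - T r < 1 := by
    rcases le_or_gt (r + t) (m + 1) with h | h
    · rcases eq_or_lt_of_le h with h' | h'
      · rw [h', hTn]; linarith
      · have := hrmax (r + t) (Finset.mem_range.mpr h')
        linarith
    · have hs : r + t = (m + 1) + (r + t - (m + 1)) := by omega
      have hslt : r + t - (m + 1) < m + 1 := by omega
      have h2 := hrmax (r + t - (m + 1)) (Finset.mem_range.mpr hslt)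
      rw [hs, hTadd, hTn]
      linarith
  linarith
end
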